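/- Let R be a root system of type a Cartan scheme C, let X be an object, m ∈ ℕ, and i_1,…,i_m ∈ I such that w = s_{i_1}⋯s_{i_m} is a morphism with target X of length ℓ(w) = m. Then the roots β_k = id_X s_{i_1}⋯s_{i_{k-1}}(α_{i_k}) for k = 1,…,m are positive and pairwise distinct. -/

import Mathlib

/-- A Cartan scheme `C = C(I, X, (r_i), (C^X))`:  a finite nonempty index set `I`,
a set of objects `X`, involutive maps `r i : X → X` (axiom (C1)), and for each object
a generalized Cartan matrix `c x : I → I → ℤ` satisfying axiom (C2). -/
structure CartanScheme (I X : Type*) [Fintype I] [DecidableEq I] [Nonempty I] [Nonempty X] where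
  r : I → X → X
  c : X → I → I → ℤ
  r_invol : ∀ i x, r i (r i x) = x
  c_diag : ∀ x i, c x i i = 2
  c_offdiag_nonpos : ∀ x i j, i ≠ j → c x i j ≤ 0
  c_zero_symm : ∀ x i j, c x i j = 0 → c x j i = 0
  c2 : ∀ x i j, c (r i x) i j = c x i j

namespace CartanScheme

variable {I X : Type*} [Fintype I] [DecidableEq I] [Nonempty I] [Nonempty X]

/-- The standard basis vector `α_i` of `ℤ^I`. -/
def alpha (i : I) : I → ℤ := Pi.single i 1

/-- The reflection `s_i^X ∈ Aut(ℤ^I)`, determined by `s_i^X (α_j) = α_j - c_{ij}^X • α_i`. -/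
def s (C : CartanScheme I X) (x : X) (i : I) : (I → ℤ) → (I → ℤ) :=
  fun v => v - (∑ j, C.c x i j * v j) • alpha i

/-- The source object of the morphism `id_x s_{i_1} ⋯ s_{i_m}` of the Weyl groupoid,
represented by the word `[i_1, …, i_m]` with target `x`;  it equals
`r_{i_m} ⋯ r_{i_1}(x)`. -/
def src (C : CartanScheme I X) : X → List I → X
  | x, [] => x
  | x, i :: t => C.src (C.r i x) t

/-- The action on `ℤ^I` of the morphism `id_x s_{i_1} ⋯ s_{i_m}` of the Weyl groupoid,
namely `s_{i_1}^{r_{i_1}(x)} ∘ s_{i_2}^{r_{i_2} r_{i_1}(x)} ∘ ⋯`. -/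
def wmap (C : CartanScheme I X) : X → List I → (I → ℤ) → (I → ℤ)
  | _, [] => id
  | x, i :: t => (C.s (C.r i x) i) ∘ (C.wmap (C.r i x) t)

/-- The list of roots `β_k = s_{i_1}^{r_{i_1}(x)} ⋯ s_{i_{k-1}}^{r_{i_{k-1}} ⋯ r_{i_1}(x)} (α_{i_k})`,
`k = 1, …, m`, associated with the word `(i_1, …, i_m)` and the object `x`. -/
def betas (C : CartanScheme I X) : X → List I → List (I → ℤ)
  | _, [] => []
  | x, i :: t => alpha i :: ((C.betas (C.r i x) t).map (C.s (C.r i x) i))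

/-- The length `ℓ` of the morphism of the Weyl groupoid represented by the word `w`
(with target `x`):  the minimal length of a word representing the same morphism. -/
noncomputable def len (C : CartanScheme I X) (x : X) (w : List I) : ℕ :=
  sInf {m | ∃ w' : List I, w'.length = m ∧
    C.src x w' = C.src x w ∧ C.wmap x w' = C.wmap x w}

end CartanScheme

/-- A root system `R` of type a Cartan scheme `C`:  subsets `Δ x ⊆ ℤ^I` satisfying
the axioms (R1)–(R4). -/
structure RootSystemOf {I X : Type*} [Fintype I] [DecidableEq I] [Nonempty I] [Nonempty X]
    (C : CartanScheme I X) where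
  Δ : X → Set (I → ℤ)
  R1 : ∀ x v, v ∈ Δ x → 0 ≤ v ∨ 0 ≤ -v
  R1' : ∀ x v, v ∈ Δ x → -v ∈ Δ x
  R2_mem : ∀ x i, CartanScheme.alpha i ∈ Δ x
  R2 : ∀ x i v, v ∈ Δ x → (∃ n : ℤ, v = n • CartanScheme.alpha i) →
    v = CartanScheme.alpha i ∨ v = - CartanScheme.alpha i
  R3 : ∀ x i, (C.s x i) '' (Δ x) = Δ (C.r i x)
  R4 : ∀ x i j, i ≠ j →
    ∀ _ : {v ∈ Δ x | ∃ a b : ℕ, v = (a : ℤ) • CartanScheme.alpha i +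
        (b : ℤ) • CartanScheme.alpha j}.Finite,
      (fun y => C.r i (C.r j y))^[{v ∈ Δ x | ∃ a b : ℕ,
        v = (a : ℤ) • CartanScheme.alpha i + (b : ℤ) • CartanScheme.alpha j}.ncard] x = x

namespace RootSystemOf

open CartanScheme

variable {I X : Type*} [Fintype I] [DecidableEq I] [Nonempty I] [Nonempty X]
variable {C : CartanScheme I X}

/-- The set of positive roots `Δ^x_+` at the object `x`. -/
def pos (R : RootSystemOf C) (x : X) : Set (I → ℤ) := {v ∈ R.Δ x | 0 ≤ v}

open Classical in
/-- The number of indices `k` with `λ = ± β_k` in a list of roots. -/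
noncomputable def countSigned (lam : I → ℤ) : List (I → ℤ) → ℕ
  | [] => 0
  | b :: t => (if b = lam ∨ b = -lam then 1 else 0) + countSigned lam t

/-- The set `Λ_+^x(i_1, …, i_m)` of positive roots `λ` such that the number of `k`
with `λ = ± β_k` is odd. -/
noncomputable def LambdaPlus (R : RootSystemOf C) (x : X) (w : List I) : Set (I → ℤ) :=
  {lam | lam ∈ R.Δ x ∧ 0 ≤ lam ∧ Odd (countSigned lam (C.betas x w))}

/-- The right Duflo order on morphisms of the Weyl groupoid with target `x`
(morphisms being represented by words):  `w₁ ≤_D w₂` iff `w₂ = w₁ u` for some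
morphism `u` with `ℓ(w₂) = ℓ(w₁) + ℓ(u)`. -/
def DufloLE (R : RootSystemOf C) (x : X) (w₁ w₂ : List I) : Prop :=
  ∃ u : List I, C.src (C.src x w₁) u = C.src x w₂ ∧
    C.wmap x w₂ = C.wmap x w₁ ∘ C.wmap (C.src x w₁) u ∧
    C.len x w₂ = C.len x w₁ + C.len (C.src x w₁) u

end RootSystemOf

open CartanScheme RootSystemOf

section RSAux
set_option linter.unusedSectionVars false
set_option linter.unusedVariables false
open CartanScheme List

variable {I X : Type*} [Fintype I] [DecidableEq I] [Nonempty I] [Nonempty X]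
variable (C : CartanScheme I X)

namespace CartanScheme

lemma alpha_apply (i j : I) : alpha i j = if j = i then 1 else 0 := by
  simp [alpha, Pi.single_apply]

@[simp] lemma alpha_self (i : I) : alpha i i = 1 := by simp [alpha_apply]

lemma alpha_apply_ne {i j : I} (h : j ≠ i) : alpha i j = 0 := by simp [alpha_apply, h]

lemma alpha_nonneg (i : I) : 0 ≤ alpha i := by
  intro j; by_cases h : j = i <;> simp [alpha_apply, h]

lemma alpha_ne_zero (i : I) : alpha i ≠ 0 := by
  intro h
  have := congrFun h i
  simp at this

/-- the linear functional in the definition of `s`. -/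
def phi (x : X) (i : I) (v : I → ℤ) : ℤ := ∑ j, C.c x i j * v j

lemma s_apply (x : X) (i : I) (v : I → ℤ) :
    C.s x i v = v - C.phi x i v • alpha i := rfl

lemma s_apply_coord (x : X) (i : I) (v : I → ℤ) (l : I) :
    C.s x i v l = v l - C.phi x i v * alpha i l := rfl

lemma s_apply_coord_ne (x : X) (i : I) (v : I → ℤ) {l : I} (h : l ≠ i) :
    C.s x i v l = v l := by
  simp [s_apply_coord, alpha_apply_ne h]

lemma phi_add (x : X) (i : I) (u v : I → ℤ) :
    C.phi x i (u + v) = C.phi x i u + C.phi x i v := by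
  simp [phi, mul_add, Finset.sum_add_distrib]

lemma phi_smul (x : X) (i : I) (z : ℤ) (v : I → ℤ) :
    C.phi x i (z • v) = z * C.phi x i v := by
  rw [phi, phi, Finset.mul_sum]
  exact Finset.sum_congr rfl (by intros; simp [Pi.smul_apply]; ring)

lemma phi_alpha_self (x : X) (i : I) : C.phi x i (alpha i) = 2 := by
  rw [phi, Finset.sum_eq_single i]
  · simp [C.c_diag]
  · intro j _ hj; simp [alpha_apply_ne hj]
  · intro h; simp at h

lemma phi_alpha (x : X) (i j : I) : C.phi x i (alpha j) = C.c x i j := by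
  rw [phi, Finset.sum_eq_single j]
  · simp
  · intro k _ hk; simp [alpha_apply_ne hk]
  · intro h; simp at h

lemma s_add (x : X) (i : I) (u v : I → ℤ) :
    C.s x i (u + v) = C.s x i u + C.s x i v := by
  simp [s_apply, phi_add, add_smul]; abel

lemma s_smul (x : X) (i : I) (z : ℤ) (v : I → ℤ) :
    C.s x i (z • v) = z • C.s x i v := by
  rw [s_apply, s_apply, phi_smul]
  module

lemma s_neg (x : X) (i : I) (v : I → ℤ) : C.s x i (-v) = -(C.s x i v) := by
  have := C.s_smul x i (-1) v
  simpa using this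

lemma s_alpha_self (x : X) (i : I) : C.s x i (alpha i) = -(alpha i) := by
  rw [s_apply, phi_alpha_self]
  module

lemma s_invol (x : X) (i : I) (v : I → ℤ) : C.s x i (C.s x i v) = v := by
  rw [s_apply, s_apply]
  have h1 : C.phi x i (v - C.phi x i v • alpha i) = - C.phi x i v := by
    have : v - C.phi x i v • alpha i = v + (-(C.phi x i v)) • alpha i := by module
    rw [this, phi_add, phi_smul, phi_alpha_self]; ring
  rw [h1]
  module

lemma s_obj (x : X) (i : I) : C.s (C.r i x) i = C.s x i := by
  funext v
  simp [s_apply, phi, C.c2]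

lemma s_inj (x : X) (i : I) : Function.Injective (C.s x i) := by
  intro u v h
  have := congrArg (C.s x i) h
  rwa [s_invol, s_invol] at this

@[simp] lemma wmap_nil (x : X) : C.wmap x [] = id := rfl

lemma wmap_cons (x : X) (i : I) (t : List I) :
    C.wmap x (i :: t) = (C.s x i) ∘ (C.wmap (C.r i x) t) := by
  show (C.s (C.r i x) i) ∘ _ = _
  rw [s_obj]

@[simp] lemma src_nil (x : X) : C.src x [] = x := rfl

@[simp] lemma src_cons (x : X) (i : I) (t : List I) :
    C.src x (i :: t) = C.src (C.r i x) t := rfl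

lemma src_append (x : X) (w u : List I) :
    C.src x (w ++ u) = C.src (C.src x w) u := by
  induction w generalizing x with
  | nil => rfl
  | cons i t ih => simp [ih]

lemma wmap_append (x : X) (w u : List I) :
    C.wmap x (w ++ u) = (C.wmap x w) ∘ (C.wmap (C.src x w) u) := by
  induction w generalizing x with
  | nil => rfl
  | cons i t ih =>
      show C.wmap x (i :: (t ++ u)) = _
      rw [wmap_cons, ih, wmap_cons]
      rfl

lemma wmap_add (x : X) (w : List I) (u v : I → ℤ) :
    C.wmap x w (u + v) = C.wmap x w u + C.wmap x w v := by
  induction w generalizing x with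
  | nil => rfl
  | cons i t ih =>
      rw [wmap_cons]
      simp only [Function.comp_apply]
      rw [ih, s_add]

lemma wmap_smul (x : X) (w : List I) (z : ℤ) (v : I → ℤ) :
    C.wmap x w (z • v) = z • C.wmap x w v := by
  induction w generalizing x with
  | nil => rfl
  | cons i t ih =>
      rw [wmap_cons]
      simp only [Function.comp_apply]
      rw [ih, s_smul]

lemma wmap_neg (x : X) (w : List I) (v : I → ℤ) :
    C.wmap x w (-v) = -(C.wmap x w v) := by
  have := C.wmap_smul x w (-1) v; simpa using this

lemma src_reverse (x : X) (w : List I) :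
    C.src (C.src x w) w.reverse = x := by
  induction w generalizing x with
  | nil => rfl
  | cons i t ih =>
      simp only [List.reverse_cons, src_cons, src_append, ih (C.r i x)]
      simp [C.r_invol]

lemma wmap_reverse (x : X) (w : List I) (v : I → ℤ) :
    C.wmap (C.src x w) w.reverse (C.wmap x w v) = v := by
  induction w generalizing x v with
  | nil => rfl
  | cons i t ih =>
      simp only [List.reverse_cons, src_cons, wmap_append, Function.comp_apply]
      rw [C.src_reverse (C.r i x) t]
      have h1 : ∀ u, C.wmap (C.r i x) [i] u = C.s x i u := by
        intro u
        rw [wmap_cons]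
        simp [s_obj]
      rw [C.wmap_cons x i t]
      simp only [Function.comp_apply]
      rw [h1, s_invol]
      exact ih (C.r i x) v

lemma wmap_reverse' (x : X) (w : List I) (v : I → ℤ) :
    C.wmap x w (C.wmap (C.src x w) w.reverse v) = v := by
  have h := C.wmap_reverse (C.src x w) w.reverse v
  rwa [src_reverse, List.reverse_reverse] at h

lemma wmap_inj (x : X) (w : List I) : Function.Injective (C.wmap x w) := by
  intro u v h
  have := congrArg (C.wmap (C.src x w) w.reverse) h
  rwa [wmap_reverse, wmap_reverse] at this

end CartanScheme
namespace CartanScheme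

/-- Two words with target `x` represent the same morphism of the Weyl groupoid. -/
def Rep (C : CartanScheme I X) (x : X) (w w' : List I) : Prop :=
  C.src x w' = C.src x w ∧ C.wmap x w' = C.wmap x w

lemma Rep.refl (x : X) (w : List I) : C.Rep x w w := ⟨rfl, rfl⟩

lemma Rep.symm {x : X} {w w' : List I} (h : C.Rep x w w') : C.Rep x w' w :=
  ⟨h.1.symm, h.2.symm⟩

lemma Rep.trans {x : X} {w₁ w₂ w₃ : List I} (h : C.Rep x w₁ w₂) (h' : C.Rep x w₂ w₃) :
    C.Rep x w₁ w₃ := ⟨h'.1.trans h.1, h'.2.trans h.2⟩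

lemma len_le_of_rep {x : X} {w w' : List I} (h : C.Rep x w w') :
    C.len x w ≤ w'.length :=
  Nat.sInf_le ⟨w', rfl, h.1, h.2⟩

lemma len_le_length (x : X) (w : List I) : C.len x w ≤ w.length :=
  C.len_le_of_rep (Rep.refl C x w)

lemma exists_min_word (x : X) (w : List I) :
    ∃ w', C.Rep x w w' ∧ w'.length = C.len x w := by
  have hne : {m | ∃ w' : List I, w'.length = m ∧
      C.src x w' = C.src x w ∧ C.wmap x w' = C.wmap x w}.Nonempty :=
    ⟨w.length, w, rfl, rfl, rfl⟩
  have := Nat.sInf_mem hne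
  obtain ⟨w', hlen, h1, h2⟩ := this
  exact ⟨w', ⟨h1, h2⟩, hlen⟩

lemma len_congr {x : X} {w w' : List I} (h : C.Rep x w w') :
    C.len x w = C.len x w' := by
  unfold len
  rw [h.1, h.2]

lemma rep_append_left {x : X} {w w' : List I} (h : C.Rep x w w') (u : List I) :
    C.Rep x (w ++ u) (w' ++ u) := by
  constructor
  · rw [src_append, src_append, h.1]
  · rw [wmap_append, wmap_append, h.1, h.2]

lemma rep_append_right {x : X} (w : List I) {u u' : List I}
    (h : C.Rep (C.src x w) u u') : C.Rep x (w ++ u) (w ++ u') := by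
  constructor
  · rw [src_append, src_append, h.1]
  · rw [wmap_append, wmap_append, h.2]

lemma rep_cons {x : X} (i : I) {u u' : List I}
    (h : C.Rep (C.r i x) u u') : C.Rep x (i :: u) (i :: u') := by
  constructor
  · exact h.1
  · show C.wmap x (i :: u') = C.wmap x (i :: u)
    rw [wmap_cons, wmap_cons, h.2]

lemma rep_cancel (x : X) (i : I) (w : List I) : C.Rep x (i :: i :: w) w := by
  constructor
  · show C.src x w = C.src (C.r i (C.r i x)) w
    rw [C.r_invol]
  · show C.wmap x w = C.wmap x (i :: i :: w)
    rw [wmap_cons, wmap_cons, C.r_invol]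
    funext v
    simp only [Function.comp_apply]
    rw [s_obj, s_invol]

/-- `w` is a reduced word at `x`. -/
def Reduced (C : CartanScheme I X) (x : X) (w : List I) : Prop :=
  C.len x w = w.length

lemma reduced_rep_length {x : X} {w w' : List I} (hw : C.Reduced x w)
    (h : C.Rep x w w') : w.length ≤ w'.length := by
  have := C.len_le_of_rep h
  unfold Reduced at hw
  omega

lemma reduced_of_rep {x : X} {w w' : List I} (hw : C.Reduced x w)
    (h : C.Rep x w w') (hlen : w'.length = w.length) : C.Reduced x w' := by
  unfold Reduced
  rw [← C.len_congr h, hw, hlen]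

lemma reduced_prefix {x : X} {p q : List I} (h : C.Reduced x (p ++ q)) :
    C.Reduced x p := by
  unfold Reduced at h ⊢
  refine le_antisymm (C.len_le_length x p) ?_
  by_contra hlt
  push_neg at hlt
  obtain ⟨p', hrep, hplen⟩ := C.exists_min_word x p
  have h2 := C.rep_append_left hrep q
  have h3 := C.len_le_of_rep h2
  rw [List.length_append] at h3
  rw [List.length_append] at h
  omega

lemma reduced_suffix {x : X} {p q : List I} (h : C.Reduced x (p ++ q)) :
    C.Reduced (C.src x p) q := by
  unfold Reduced at h ⊢
  refine le_antisymm (C.len_le_length _ q) ?_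
  by_contra hlt
  push_neg at hlt
  obtain ⟨q', hrep, hqlen⟩ := C.exists_min_word (C.src x p) q
  have h2 := C.rep_append_right p hrep
  have h3 := C.len_le_of_rep h2
  rw [List.length_append] at h3
  rw [List.length_append] at h
  omega

lemma reduced_infix {x : X} {p q u : List I} (h : C.Reduced x (p ++ q ++ u)) :
    C.Reduced (C.src x p) q := by
  have h1 : C.Reduced x (p ++ q) := by
    rw [List.append_assoc] at h
    exact C.reduced_prefix (q := u) (by rwa [← List.append_assoc] at h)
  exact C.reduced_suffix h1

lemma betas_append (x : X) (w u : List I) :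
    C.betas x (w ++ u) = C.betas x w ++ (C.betas (C.src x w) u).map (C.wmap x w) := by
  induction w generalizing x with
  | nil =>
      show C.betas x u = C.betas x [] ++ (C.betas (C.src x []) u).map (C.wmap x [])
      show C.betas x u = [] ++ (C.betas x u).map id
      simp
  | cons i t ih =>
      show alpha i :: (C.betas (C.r i x) (t ++ u)).map (C.s (C.r i x) i)
          = (alpha i :: (C.betas (C.r i x) t).map (C.s (C.r i x) i))
            ++ (C.betas (C.src (C.r i x) t) u).map (C.wmap x (i :: t))
      rw [ih (C.r i x), List.map_append, List.map_map]
      rfl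

lemma betas_snoc (x : X) (w : List I) (a : I) :
    C.betas x (w ++ [a]) = C.betas x w ++ [C.wmap x w (alpha a)] := by
  rw [betas_append]
  rfl

lemma betas_length (x : X) (w : List I) : (C.betas x w).length = w.length := by
  induction w generalizing x with
  | nil => rfl
  | cons i t ih =>
      show (alpha i :: _).length = _
      simp [ih]

end CartanScheme
namespace RootSystemOf

variable {C}
variable (R : RootSystemOf C)

lemma root_ne_zero {x : X} {v : I → ℤ} (hv : v ∈ R.Δ x) : v ≠ 0 := by
  intro h
  subst h
  obtain ⟨i⟩ := ‹Nonempty I›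
  rcases R.R2 x i 0 hv ⟨0, by simp⟩ with h | h
  · exact absurd (congrFun h i) (by simp)
  · exact absurd (congrFun h i) (by simp)

lemma pos_not_neg {v : I → ℤ} (hv : v ≠ 0) (h : 0 ≤ v) : ¬ 0 ≤ -v := by
  intro h'
  apply hv
  funext l
  have := h l
  have h2 := h' l
  simp at this h2 ⊢
  omega

lemma s_mem {x : X} {i : I} {v : I → ℤ} (hv : v ∈ R.Δ x) :
    C.s x i v ∈ R.Δ (C.r i x) := by
  rw [← R.R3 x i]
  exact ⟨v, hv, rfl⟩

lemma s_mem' {x : X} {i : I} {v : I → ℤ} (hv : v ∈ R.Δ (C.r i x)) :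
    C.s x i v ∈ R.Δ x := by
  have := R.s_mem (i := i) (x := C.r i x) hv
  rwa [C.s_obj, C.r_invol] at this

lemma wmap_mem {w : List I} : ∀ {x : X} {v : I → ℤ}, v ∈ R.Δ (C.src x w) →
    C.wmap x w v ∈ R.Δ x := by
  induction w with
  | nil => intro x v hv; exact hv
  | cons i t ih =>
      intro x v hv
      rw [C.wmap_cons]
      exact R.s_mem' (ih hv)

/-- Lemma A :  the reflection `s_i` maps positive roots other than `α_i`
to positive roots. -/
lemma s_pos {x : X} {i : I} {v : I → ℤ} (hv : v ∈ R.Δ x) (hpos : 0 ≤ v)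
    (hne : v ≠ alpha i) : 0 ≤ C.s x i v := by
  -- find a coordinate j ≠ i with v j > 0
  have hex : ∃ j, j ≠ i ∧ 0 < v j := by
    by_contra hc
    push_neg at hc
    have hvi : v = v i • alpha i := by
      funext l
      by_cases hl : l = i
      · subst hl; simp
      · have h1 := hc l hl
        have h2 := hpos l
        have : v l = 0 := le_antisymm h1 h2
        simp [this, alpha_apply_ne hl]
    rcases R.R2 x i v hv ⟨v i, hvi⟩ with h | h
    · exact hne h
    · rw [h] at hpos
      have := hpos i
      simp at this
  obtain ⟨j, hji, hj⟩ := hex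
  have hsv : C.s x i v ∈ R.Δ (C.r i x) := R.s_mem hv
  rcases R.R1 _ _ hsv with h | h
  · exact h
  · exfalso
    have := h j
    rw [Pi.neg_apply, C.s_apply_coord_ne x i v hji] at this
    simp at this
    omega

end RootSystemOf
namespace CartanScheme

/-- the `k`-th letter (0-indexed) of the alternating word starting with `a`. -/
def ltr (a b : I) (k : ℕ) : I := if k % 2 = 0 then a else b

/-- the alternating word `[a, b, a, …]` of length `n`. -/
def alt (a b : I) (n : ℕ) : List I := (List.range n).map (ltr a b)

@[simp] lemma ltr_zero (a b : I) : ltr a b 0 = a := rfl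

lemma ltr_succ (a b : I) (k : ℕ) : ltr a b (k + 1) = ltr b a k := by
  unfold ltr
  by_cases h : k % 2 = 0
  · have h1 : ¬ (k+1) % 2 = 0 := by omega
    simp [h, h1]
  · have h1 : (k+1) % 2 = 0 := by omega
    simp [h, h1]

@[simp] lemma alt_zero (a b : I) : alt a b 0 = [] := rfl

lemma alt_succ_snoc (a b : I) (n : ℕ) :
    alt a b (n + 1) = alt a b n ++ [ltr a b n] := by
  unfold alt
  rw [List.range_succ, List.map_append]
  rfl

lemma alt_cons (a b : I) (n : ℕ) : alt a b (n + 1) = a :: alt b a n := by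
  unfold alt
  rw [List.range_succ_eq_map, List.map_cons, List.map_map]
  congr 1
  apply List.map_congr_left
  intro k _
  exact ltr_succ a b k

@[simp] lemma alt_length (a b : I) (n : ℕ) : (alt a b n).length = n := by
  simp [alt]

lemma mem_alt {a b c : I} {n : ℕ} (h : c ∈ alt a b n) : c = a ∨ c = b := by
  obtain ⟨k, _, hk⟩ := List.mem_map.1 h
  unfold ltr at hk
  by_cases h2 : k % 2 = 0
  · left; rw [← hk]; simp [h2]
  · right; rw [← hk]; simp [h2]

lemma ltr_mem {a b : I} (k : ℕ) : ltr a b k = a ∨ ltr a b k = b := by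
  unfold ltr; by_cases h : k % 2 = 0 <;> simp [h]

lemma ltr_ne {a b : I} (hab : a ≠ b) (k : ℕ) : ltr a b (k + 1) ≠ ltr a b k := by
  unfold ltr
  by_cases h : k % 2 = 0
  · have : (k+1) % 2 ≠ 0 := by omega
    simp [h, this]; exact hab.symm
  · have : (k+1) % 2 = 0 := by omega
    simp [h, this]; exact hab

lemma ltr_flip (a b : I) (k : ℕ) : ltr b a (k+1) = ltr a b k := ltr_succ b a k

lemma alt_take (a b : I) (n k : ℕ) : (alt a b n).take k = alt a b (min k n) := by
  unfold alt
  rw [← List.map_take, List.take_range]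

lemma reverse_alt (a b : I) (n : ℕ) :
    (alt a b n).reverse = if Even n then alt b a n else alt a b n := by
  induction n generalizing a b with
  | zero => simp
  | succ m ih =>
      have key : (alt a b (m+1)).reverse = (if Even m then alt a b m else alt b a m) ++ [a] := by
        rw [alt_cons, List.reverse_cons, ih b a]
      by_cases hm : m % 2 = 0
      · have h1 : ¬ Even (m+1) := by rw [Nat.even_iff]; omega
        have h0 : Even m := Nat.even_iff.2 hm
        rw [key, if_pos h0, if_neg h1, alt_succ_snoc]
        congr 1
        simp [ltr, hm]
      · have h1 : Even (m+1) := by rw [Nat.even_iff]; omega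
        have h0 : ¬ Even m := by rw [Nat.even_iff]; omega
        rw [key, if_neg h0, if_pos h1, alt_succ_snoc]
        congr 1
        simp [ltr, hm]

/-- the `k`-th root (0-indexed) of the alternating sequence at `x` starting with `a`. -/
def theta (C : CartanScheme I X) (a b : I) (x : X) (k : ℕ) : I → ℤ :=
  C.wmap x (alt a b k) (alpha (ltr a b k))

lemma theta_zero (a b : I) (x : X) : C.theta a b x 0 = alpha a := rfl

lemma theta_succ (a b : I) (x : X) (k : ℕ) :
    C.theta a b x (k + 1) = C.s x a (C.theta b a (C.r a x) k) := by
  unfold theta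
  rw [alt_cons, wmap_cons, ltr_succ]
  rfl

lemma theta_succ' (a b : I) (x : X) (k : ℕ) :
    C.s x a (C.theta a b x (k + 1)) = C.theta b a (C.r a x) k := by
  rw [theta_succ, s_invol]

/-- membership of `v` in the span of `α_a, α_b`. -/
def VS (a b : I) (v : I → ℤ) : Prop := ∀ l, l ≠ a → l ≠ b → v l = 0

lemma VS.swap {a b : I} {v : I → ℤ} (h : VS a b v) : VS b a v :=
  fun l h1 h2 => h l h2 h1

lemma VS_alpha_left (a b : I) : VS a b (alpha a) :=
  fun l h1 _ => alpha_apply_ne h1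

lemma VS_alpha_right (a b : I) : VS a b (alpha b) :=
  fun l _ h2 => alpha_apply_ne h2

lemma VS_s {a b : I} {v : I → ℤ} (x : X) (h : VS a b v) : VS a b (C.s x a v) := by
  intro l h1 h2
  rw [C.s_apply_coord_ne x a v h1]
  exact h l h1 h2

lemma VS_neg {a b : I} {v : I → ℤ} (h : VS a b v) : VS a b (-v) := by
  intro l h1 h2; simp [h l h1 h2]

lemma VS_smul {a b : I} {v : I → ℤ} (z : ℤ) (h : VS a b v) : VS a b (z • v) := by
  intro l h1 h2; simp [h l h1 h2]

lemma VS_add {a b : I} {u v : I → ℤ} (hu : VS a b u) (hv : VS a b v) :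
    VS a b (u + v) := by
  intro l h1 h2; simp [hu l h1 h2, hv l h1 h2]

lemma VS_theta (a b : I) (x : X) (k : ℕ) : VS a b (C.theta a b x k) := by
  induction k generalizing a b x with
  | zero => exact VS_alpha_left a b
  | succ m ih =>
      rw [theta_succ]
      exact C.VS_s x ((ih b a (C.r a x)).swap)

lemma phi_VS {a b : I} (hab : a ≠ b) {v : I → ℤ} (x : X) (i : I) (h : VS a b v) :
    C.phi x i v = C.c x i a * v a + C.c x i b * v b := by
  unfold phi
  rw [← Finset.sum_subset (Finset.subset_univ {a, b})]
  · rw [Finset.sum_pair hab]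
  · intro l _ hl
    simp only [Finset.mem_insert, Finset.mem_singleton] at hl
    push_neg at hl
    rw [h l hl.1 hl.2, mul_zero]

/-- the 2×2 determinant of the `(a, b)`-coordinates. -/
def DD (a b : I) (v w : I → ℤ) : ℤ := v a * w b - v b * w a

lemma DD_swap (a b : I) (v w : I → ℤ) : DD b a v w = - DD a b v w := by
  unfold DD; ring

lemma DD_self (a b : I) (v : I → ℤ) : DD a b v v = 0 := by unfold DD; ring

lemma DD_s {a b : I} (hab : a ≠ b) (x : X) {v w : I → ℤ}
    (hv : VS a b v) (hw : VS a b w) :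
    DD a b (C.s x a v) (C.s x a w) = - DD a b v w := by
  have h1 : ∀ u : I → ℤ, VS a b u → C.s x a u a = - u a - C.c x a b * u b := by
    intro u hu
    rw [C.s_apply_coord, alpha_self, mul_one, C.phi_VS hab x a hu, C.c_diag]
    ring
  have h2 : ∀ u : I → ℤ, C.s x a u b = u b :=
    fun u => C.s_apply_coord_ne x a u (Ne.symm hab)
  unfold DD
  rw [h1 v hv, h1 w hw, h2, h2]
  ring

/-- the two-dimensional Cramer identity. -/
lemma dd_identity {a b : I} {u v w : I → ℤ}
    (hu : VS a b u) (hv : VS a b v) (hw : VS a b w) :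
    DD a b u v • w = DD a b w v • u + DD a b u w • v := by
  funext l
  by_cases h1 : l = a
  · subst h1; simp only [Pi.add_apply, Pi.smul_apply, smul_eq_mul]; unfold DD; ring
  by_cases h2 : l = b
  · subst h2; simp only [Pi.add_apply, Pi.smul_apply, smul_eq_mul]; unfold DD; ring
  · simp [hu l h1 h2, hv l h1 h2, hw l h1 h2]

lemma theta_DD {a b : I} (hab : a ≠ b) (x : X) (k : ℕ) :
    DD a b (C.theta a b x k) (C.theta a b x (k + 1)) = 1 := by
  induction k generalizing a b x with
  | zero =>
      rw [C.theta_zero, C.theta_succ, C.theta_zero]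
      unfold DD
      have h1 : C.s x a (alpha b) a = - C.c x a b := by
        rw [C.s_apply_coord, alpha_self, mul_one, phi_alpha, alpha_apply_ne hab]
        ring
      have h2 : C.s x a (alpha b) b = 1 := by
        rw [C.s_apply_coord_ne x a _ (Ne.symm hab), alpha_self]
      rw [h1, h2, alpha_self, alpha_apply_ne (Ne.symm hab)]
      ring
  | succ m ih =>
      rw [C.theta_succ a b x m, C.theta_succ a b x (m+1)]
      rw [C.DD_s hab x (C.VS_theta b a (C.r a x) m).swap (C.VS_theta b a (C.r a x) (m+1)).swap]
      rw [show (DD a b (C.theta b a (C.r a x) m) (C.theta b a (C.r a x) (m+1)))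
            = - DD b a (C.theta b a (C.r a x) m) (C.theta b a (C.r a x) (m+1)) by
          rw [DD_swap]]
      rw [ih hab.symm]
      ring

end CartanScheme
namespace RootSystemOf

variable {C}

lemma theta_mem (R : RootSystemOf C) (a b : I) (x : X) (k : ℕ) :
    C.theta a b x k ∈ R.Δ x :=
  R.wmap_mem (R.R2_mem _ _)

lemma theta_ne_zero (R : RootSystemOf C) (a b : I) (x : X) (k : ℕ) :
    C.theta a b x k ≠ 0 :=
  R.root_ne_zero (R.theta_mem a b x k)

/-- The set of positive roots at `x` in the span of `α_a` and `α_b`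
(in the form used in axiom (R4)). -/
def Pset (R : RootSystemOf C) (a b : I) (x : X) : Set (I → ℤ) :=
  {v ∈ R.Δ x | ∃ p q : ℕ, v = (p : ℤ) • alpha a + (q : ℤ) • alpha b}

lemma Pset_symm (R : RootSystemOf C) (a b : I) (x : X) :
    R.Pset a b x = R.Pset b a x := by
  unfold Pset
  ext v
  constructor
  · rintro ⟨h1, p, q, h2⟩; exact ⟨h1, q, p, by rw [h2]; abel⟩
  · rintro ⟨h1, p, q, h2⟩; exact ⟨h1, q, p, by rw [h2]; abel⟩

lemma mem_Pset {R : RootSystemOf C} {a b : I} (hab : a ≠ b) {x : X} {v : I → ℤ} :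
    v ∈ R.Pset a b x ↔ v ∈ R.Δ x ∧ 0 ≤ v ∧ VS a b v := by
  constructor
  · rintro ⟨h1, p, q, h2⟩
    refine ⟨h1, ?_, ?_⟩
    · intro l
      rw [h2]
      simp only [Pi.add_apply, Pi.smul_apply, smul_eq_mul, Pi.zero_apply]
      have h3 := alpha_nonneg a l
      have h4 := alpha_nonneg b l
      simp only [Pi.zero_apply] at h3 h4
      exact add_nonneg (mul_nonneg (Int.natCast_nonneg p) h3)
        (mul_nonneg (Int.natCast_nonneg q) h4)
    · intro l hla hlb
      rw [h2]
      simp [alpha_apply_ne hla, alpha_apply_ne hlb]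
  · rintro ⟨h1, h2, h3⟩
    refine ⟨h1, (v a).toNat, (v b).toNat, ?_⟩
    rw [Int.toNat_of_nonneg (h2 a), Int.toNat_of_nonneg (h2 b)]
    funext l
    by_cases hla : l = a
    · subst hla; simp [alpha_apply_ne hab]
    by_cases hlb : l = b
    · subst hlb; simp [alpha_apply_ne hab.symm]
    · simp [alpha_apply_ne hla, alpha_apply_ne hlb, h3 l hla hlb]

lemma theta_mem_Pset (R : RootSystemOf C) {a b : I} (hab : a ≠ b) (x : X) {k : ℕ}
    (hpos : 0 ≤ C.theta a b x k) : C.theta a b x k ∈ R.Pset a b x :=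
  (mem_Pset hab).2 ⟨R.theta_mem a b x k, hpos, C.VS_theta a b x k⟩

lemma no_mixed (R : RootSystemOf C) {x : X} {v : I → ℤ} (hv : v ∈ R.Δ x)
    {l l' : I} (h : v l < 0) (h' : 0 < v l') : False := by
  rcases R.R1 x v hv with hp | hn
  · have := hp l; simp only [Pi.zero_apply] at this; omega
  · have := hn l'; simp only [Pi.neg_apply, Pi.zero_apply] at this; omega

lemma DD_neg_right (a b : I) (v w : I → ℤ) : DD a b v (-w) = - DD a b v w := by
  unfold DD; simp; ring

lemma DD_neg_left (a b : I) (v w : I → ℤ) : DD a b (-v) w = - DD a b v w := by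
  unfold DD; simp; ring

/-- specialization of the Cramer identity to a unimodular pair. -/
lemma cramer1 {a b : I} {u v ρ : I → ℤ} (hu : VS a b u) (hv : VS a b v)
    (hρ : VS a b ρ) (h1 : DD a b u v = 1) :
    ρ = DD a b ρ v • u + DD a b u ρ • v := by
  have h := dd_identity hu hv hρ
  rwa [h1, one_smul] at h

/-- no root lies strictly inside the cone spanned by two consecutive `θ`'s. -/
lemma kill (R : RootSystemOf C) {a b : I} (hab : a ≠ b) (k : ℕ) :
    ∀ (x : X) (ρ : I → ℤ) (p q : ℤ), ρ ∈ R.Δ x →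
      ρ = p • C.theta a b x k + q • C.theta a b x (k+1) → 1 ≤ p → 1 ≤ q → False := by
  induction k generalizing a b with
  | zero =>
      intro x ρ p q hρ heq hp hq
      have hσ : C.s x a ρ ∈ R.Δ (C.r a x) := R.s_mem hρ
      have h1 : C.s x a ρ = p • (-(alpha a)) + q • (alpha b) := by
        rw [heq, C.s_add, C.s_smul, C.s_smul]
        rw [show C.theta a b x 0 = alpha a from rfl, C.s_alpha_self]
        rw [C.theta_succ', C.theta_zero]
      have ha : C.s x a ρ a < 0 := by
        rw [h1]
        simp only [Pi.add_apply, Pi.smul_apply, Pi.neg_apply, smul_eq_mul, alpha_self,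
          alpha_apply_ne hab]
        omega
      have hb : 0 < C.s x a ρ b := by
        rw [h1]
        simp only [Pi.add_apply, Pi.smul_apply, Pi.neg_apply, smul_eq_mul, alpha_self,
          alpha_apply_ne hab.symm]
        omega
      exact R.no_mixed hσ ha hb
  | succ m ih =>
      intro x ρ p q hρ heq hp hq
      have hσ : C.s x a ρ ∈ R.Δ (C.r a x) := R.s_mem hρ
      have h1 : C.s x a ρ = p • C.theta b a (C.r a x) m + q • C.theta b a (C.r a x) (m+1) := by
        rw [heq, C.s_add, C.s_smul, C.s_smul, C.theta_succ', C.theta_succ']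
      exact ih hab.symm (C.r a x) (C.s x a ρ) p q hσ h1 hp hq

/-- a root proportional to some `θ_k` is `± θ_k`. -/
lemma prop_kill (R : RootSystemOf C) {a b : I} (hab : a ≠ b) (k : ℕ) :
    ∀ (x : X) (ρ : I → ℤ) (p : ℤ), ρ ∈ R.Δ x →
      ρ = p • C.theta a b x k → ρ = C.theta a b x k ∨ ρ = - C.theta a b x k := by
  induction k generalizing a b with
  | zero =>
      intro x ρ p hρ heq
      exact R.R2 x a ρ hρ ⟨p, heq⟩
  | succ m ih =>
      intro x ρ p hρ heq
      have hσ : C.s x a ρ ∈ R.Δ (C.r a x) := R.s_mem hρ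
      have h1 : C.s x a ρ = p • C.theta b a (C.r a x) m := by
        rw [heq, C.s_smul, C.theta_succ']
      rcases ih hab.symm (C.r a x) (C.s x a ρ) p hσ h1 with h | h
      · left
        have := congrArg (C.s x a) h
        rw [C.s_invol, ← C.theta_succ'] at this
        rw [this, C.s_invol]
      · right
        have := congrArg (C.s x a) h
        rw [C.s_invol, C.s_neg, ← C.theta_succ'] at this
        rw [this, C.s_invol]

lemma exists_pos_coord {v : I → ℤ} (hv : v ≠ 0) (hpos : 0 ≤ v) :
    ∃ l, 0 < v l := by
  by_contra h
  push_neg at h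
  exact hv (funext fun l => le_antisymm (h l) (hpos l))

/-- transitivity of the rotation order on positive vectors. -/
lemma dd_trans {a b : I} {u v w : I → ℤ} (hu : VS a b u) (hv : VS a b v)
    (hw : VS a b w) (h0u : 0 ≤ u) (h0v : 0 ≤ v) (h0w : 0 ≤ w)
    (hwne : w ≠ 0) (h1 : 1 ≤ DD a b u v) (h2 : 1 ≤ DD a b v w) :
    1 ≤ DD a b u w := by
  have hid := dd_identity hu hv hw
  -- DD u v • w = DD w v • u + DD u w • v
  have hwv : DD a b w v = - DD a b v w := by unfold DD; ring
  obtain ⟨l, hl⟩ := exists_pos_coord hwne h0w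
  have h3 := congrFun hid l
  simp only [Pi.smul_apply, Pi.add_apply, smul_eq_mul] at h3
  -- DDuv * w l = DDwv * u l + DDuw * v l
  rw [hwv] at h3
  by_contra hc
  push_neg at hc
  have hu' : 0 ≤ u l := by have := h0u l; simpa using this
  have hv' : 0 ≤ v l := by have := h0v l; simpa using this
  have t1 : - DD a b v w * u l ≤ 0 := by nlinarith
  have t2 : DD a b u w * v l ≤ 0 := by nlinarith
  have h5 : DD a b u v * w l ≤ 0 := by linarith
  have h6 : 0 < DD a b u v * w l := mul_pos (by omega) hl
  linarith

lemma dd_run (R : RootSystemOf C) {a b : I} (hab : a ≠ b) (x : X) (k l : ℕ)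
    (hkl : k < l) (hrun : ∀ j, j ≤ l → 0 ≤ C.theta a b x j) :
    1 ≤ DD a b (C.theta a b x k) (C.theta a b x l) := by
  induction l with
  | zero => omega
  | succ m ih =>
      by_cases hkm : k = m
      · subst hkm
        rw [C.theta_DD hab]
      · have hklt : k < m := by omega
        have h1 := ih hklt (fun j hj => hrun j (by omega))
        exact dd_trans (C.VS_theta a b x k) (C.VS_theta a b x m) (C.VS_theta a b x (m+1))
          (hrun k (by omega)) (hrun m (by omega)) (hrun (m+1) le_rfl)
          (R.theta_ne_zero a b x (m+1)) h1 (by rw [C.theta_DD hab])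

lemma theta_run_ne (R : RootSystemOf C) {a b : I} (hab : a ≠ b) (x : X) {k l : ℕ}
    (hkl : k < l) (hrun : ∀ j, j ≤ l → 0 ≤ C.theta a b x j) :
    C.theta a b x k ≠ C.theta a b x l := by
  intro h
  have := R.dd_run hab x k l hkl hrun
  rw [h, DD_self] at this
  omega

end RootSystemOf
namespace RootSystemOf

variable {C}

lemma DD_anticomm (a b : I) (v w : I → ℤ) : DD a b v w = - DD a b w v := by
  unfold DD; ring

lemma alpha_ne_alpha {a b : I} (hab : a ≠ b) : alpha a ≠ alpha b := by
  intro h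
  have := congrFun h a
  rw [alpha_self, alpha_apply_ne hab] at this
  exact one_ne_zero this

lemma alpha_mem_Pset (R : RootSystemOf C) {a b : I} (hab : a ≠ b) (x : X) :
    alpha a ∈ R.Pset a b x ∧ alpha b ∈ R.Pset a b x :=
  ⟨(mem_Pset hab).2 ⟨R.R2_mem x a, alpha_nonneg a, VS_alpha_left a b⟩,
   (mem_Pset hab).2 ⟨R.R2_mem x b, alpha_nonneg b, VS_alpha_right a b⟩⟩

lemma find_transition (f : ℕ → ℤ) (N : ℕ) (h0 : 1 ≤ f 0) (hN : f N ≤ 0) :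
    ∃ s, s < N ∧ 1 ≤ f s ∧ f (s+1) ≤ 0 := by
  induction N with
  | zero => omega
  | succ M ih =>
      by_cases hM : f M ≤ 0
      · obtain ⟨s, h1, h2, h3⟩ := ih hM
        exact ⟨s, by omega, h2, h3⟩
      · exact ⟨M, by omega, by omega, hN⟩

lemma wrap_find (R : RootSystemOf C) {a b : I} (hab : a ≠ b) (x : X) (N : ℕ)
    (hrun : ∀ k, k < N → 0 ≤ C.theta a b x k) (hneg : ¬ 0 ≤ C.theta a b x N) :
    ∃ t, t < N ∧ C.theta a b x N = - C.theta a b x t := by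
  have hN0 : N ≠ 0 := by
    rintro rfl
    exact hneg (by rw [C.theta_zero]; exact alpha_nonneg a)
  have hη : 0 ≤ -C.theta a b x N := by
    rcases R.R1 x _ (R.theta_mem a b x N) with h | h
    · exact absurd h hneg
    · exact h
  have hηmem : -C.theta a b x N ∈ R.Δ x := R.R1' x _ (R.theta_mem a b x N)
  have hηVS : VS a b (-C.theta a b x N) := VS_neg (C.VS_theta a b x N)
  have hprop : ∀ t, t < N → DD a b (C.theta a b x t) (-C.theta a b x N) = 0 →
      C.theta a b x N = - C.theta a b x t := by
    intro t ht h0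
    have hc := cramer1 (C.VS_theta a b x t) (C.VS_theta a b x (t+1)) hηVS (C.theta_DD hab x t)
    rw [h0, zero_smul, add_zero] at hc
    rcases R.prop_kill hab t x _ _ hηmem hc with h | h
    · rw [← h, neg_neg]
    · exfalso
      have h2 : C.theta a b x N = C.theta a b x t := by
        have := congrArg Neg.neg h
        simpa using this
      exact hneg (h2 ▸ hrun t ht)
  by_cases h0 : DD a b (C.theta a b x 0) (-C.theta a b x N) = 0
  · exact ⟨0, by omega, hprop 0 (by omega) h0⟩
  have h0' : 1 ≤ DD a b (C.theta a b x 0) (-C.theta a b x N) := by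
    have hge : 0 ≤ DD a b (C.theta a b x 0) (-C.theta a b x N) := by
      rw [C.theta_zero]
      unfold DD
      rw [alpha_self, alpha_apply_ne hab.symm]
      have := hη b
      simp only [Pi.zero_apply] at this
      simpa using this
    omega
  have hfN : DD a b (C.theta a b x (N-1)) (-C.theta a b x N) ≤ 0 := by
    have hD := C.theta_DD hab x (N-1)
    have hN1 : N - 1 + 1 = N := by omega
    rw [hN1] at hD
    rw [DD_neg_right, hD]
    omega
  obtain ⟨s, hsN, hPs, hPs1⟩ :=
    find_transition (fun t => DD a b (C.theta a b x t) (-C.theta a b x N)) (N-1) h0' hfN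
  by_cases heq : DD a b (C.theta a b x (s+1)) (-C.theta a b x N) = 0
  · exact ⟨s+1, by omega, hprop (s+1) (by omega) heq⟩
  · exfalso
    have hneg1 : DD a b (C.theta a b x (s+1)) (-C.theta a b x N) ≤ -1 := by omega
    have hc := cramer1 (C.VS_theta a b x s) (C.VS_theta a b x (s+1)) hηVS (C.theta_DD hab x s)
    have hcoef : 1 ≤ DD a b (-C.theta a b x N) (C.theta a b x (s+1)) := by
      rw [DD_anticomm]
      omega
    exact R.kill hab s x _ _ _ hηmem hc hcoef hPs

lemma wrap_exact (R : RootSystemOf C) {a b : I} (hab : a ≠ b) (x : X) (N : ℕ)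
    (hN : 0 < N) (hrun : ∀ k, k < N → 0 ≤ C.theta a b x k)
    (hwrap : C.theta a b x N = - C.theta a b x 0) :
    R.Pset a b x = (C.theta a b x) '' (Set.Iio N) := by
  apply Set.Subset.antisymm
  · intro ρ hρ
    obtain ⟨hΔ, hpos, hVS⟩ := (mem_Pset hab).1 hρ
    have hprop : ∀ t, t ≤ N → DD a b (C.theta a b x t) ρ = 0 →
        ρ ∈ (C.theta a b x) '' (Set.Iio N) := by
      intro t ht h0
      have hc := cramer1 (C.VS_theta a b x t) (C.VS_theta a b x (t+1)) hVS (C.theta_DD hab x t)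
      rw [h0, zero_smul, add_zero] at hc
      rcases R.prop_kill hab t x _ _ hΔ hc with h | h
      · rcases Nat.lt_or_ge t N with htN | htN
        · exact ⟨t, htN, h.symm⟩
        · have htN' : t = N := by omega
          subst htN'
          rw [hwrap] at h
          exfalso
          have h0pos : 0 ≤ C.theta a b x 0 := by
            rw [C.theta_zero]; exact alpha_nonneg a
          have hnn := pos_not_neg (R.theta_ne_zero a b x 0) h0pos
          rw [← h] at hnn
          exact hnn hpos
      · rcases Nat.lt_or_ge t N with htN | htN
        · exfalso
          have hnn := pos_not_neg (R.theta_ne_zero a b x t) (hrun t htN)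
          rw [← h] at hnn
          exact hnn hpos
        · have htN' : t = N := by omega
          subst htN'
          rw [hwrap] at h
          have h' : ρ = C.theta a b x 0 := by simpa using h
          exact ⟨0, hN, h'.symm⟩
    by_cases h0 : DD a b (C.theta a b x 0) ρ = 0
    · exact hprop 0 (by omega) h0
    have h0' : 1 ≤ DD a b (C.theta a b x 0) ρ := by
      have hge : 0 ≤ DD a b (C.theta a b x 0) ρ := by
        rw [C.theta_zero]
        unfold DD
        rw [alpha_self, alpha_apply_ne hab.symm]
        have := hpos b
        simp only [Pi.zero_apply] at this
        simpa using this
      omega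
    have hfN : DD a b (C.theta a b x N) ρ ≤ 0 := by
      rw [hwrap, DD_neg_left]
      omega
    obtain ⟨s, hsN, hPs, hPs1⟩ :=
      find_transition (fun t => DD a b (C.theta a b x t) ρ) N h0' hfN
    by_cases heq : DD a b (C.theta a b x (s+1)) ρ = 0
    · exact hprop (s+1) (by omega) heq
    · exfalso
      have hneg1 : DD a b (C.theta a b x (s+1)) ρ ≤ -1 := by omega
      have hc := cramer1 (C.VS_theta a b x s) (C.VS_theta a b x (s+1)) hVS (C.theta_DD hab x s)
      have hcoef : 1 ≤ DD a b ρ (C.theta a b x (s+1)) := by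
        rw [DD_anticomm]
        omega
      exact R.kill hab s x _ _ _ hΔ hc hcoef hPs
  · rintro ρ ⟨k, hk, rfl⟩
    exact R.theta_mem_Pset hab x (hrun k hk)

lemma iio_ncard (N : ℕ) : (Set.Iio N).ncard = N := by
  rw [← Finset.coe_range, Set.ncard_coe_finset, Finset.card_range]

lemma theta_injOn (R : RootSystemOf C) {a b : I} (hab : a ≠ b) (x : X) (N : ℕ)
    (hrun : ∀ k, k < N → 0 ≤ C.theta a b x k) :
    Set.InjOn (C.theta a b x) (Set.Iio N) := by
  intro k hk l hl heq
  simp only [Set.mem_Iio] at hk hl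
  by_contra hne
  rcases Nat.lt_or_ge k l with h | h
  · exact R.theta_run_ne hab x h (fun j hj => hrun j (by omega)) heq
  · have h' : l < k := by omega
    exact R.theta_run_ne hab x h' (fun j hj => hrun j (by omega)) heq.symm

lemma wrap_card (R : RootSystemOf C) {a b : I} (hab : a ≠ b) (x : X) (N : ℕ)
    (hN : 0 < N) (hrun : ∀ k, k < N → 0 ≤ C.theta a b x k)
    (hwrap : C.theta a b x N = - C.theta a b x 0) :
    (R.Pset a b x).Finite ∧ (R.Pset a b x).ncard = N := by
  have himg := R.wrap_exact hab x N hN hrun hwrap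
  have hfin : ((C.theta a b x) '' (Set.Iio N)).Finite :=
    (Set.finite_Iio N).image _
  constructor
  · rw [himg]; exact hfin
  · rw [himg, Set.ncard_image_of_injOn (R.theta_injOn hab x N hrun), iio_ncard]

end RootSystemOf
namespace RootSystemOf

variable {C}

lemma neg_alpha_not_nonneg (a : I) : ¬ 0 ≤ -(alpha a : I → ℤ) := by
  intro h
  have := h a
  simp at this

/-- the bijection between the positive span-roots at `x` and at `r_a x`. -/
lemma Pset_step (R : RootSystemOf C) {a b : I} (hab : a ≠ b) (x : X) :
    Set.BijOn (fun ρ => if ρ = alpha a then alpha a else C.s x a ρ)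
      (R.Pset a b x) (R.Pset a b (C.r a x)) := by
  have hmapsto : ∀ (y : X) (ρ : I → ℤ), ρ ∈ R.Pset a b y →
      (if ρ = alpha a then alpha a else C.s y a ρ) ∈ R.Pset a b (C.r a y) := by
    intro y ρ hρ
    obtain ⟨hΔ, hpos, hVS⟩ := (mem_Pset hab).1 hρ
    by_cases h : ρ = alpha a
    · rw [if_pos h]
      exact ((R.alpha_mem_Pset hab (C.r a y))).1
    · rw [if_neg h]
      exact (mem_Pset hab).2 ⟨R.s_mem hΔ, R.s_pos hΔ hpos h, C.VS_s y hVS⟩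
  refine ⟨fun ρ hρ => hmapsto x ρ hρ, ?_, ?_⟩
  · intro ρ1 h1 ρ2 h2 heq
    obtain ⟨hΔ1, hpos1, _⟩ := (mem_Pset hab).1 h1
    obtain ⟨hΔ2, hpos2, _⟩ := (mem_Pset hab).1 h2
    simp only at heq
    by_cases e1 : ρ1 = alpha a <;> by_cases e2 : ρ2 = alpha a
    · rw [e1, e2]
    · exfalso
      rw [if_pos e1, if_neg e2] at heq
      have : ρ2 = C.s x a (alpha a) := by
        have h3 := congrArg (C.s x a) heq
        rw [C.s_invol] at h3
        exact h3.symm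
      rw [C.s_alpha_self] at this
      exact pos_not_neg (alpha_ne_zero a) (alpha_nonneg a) (this ▸ hpos2)
    · exfalso
      rw [if_neg e1, if_pos e2] at heq
      have : ρ1 = C.s x a (alpha a) := by
        have h3 := congrArg (C.s x a) heq
        rw [C.s_invol] at h3
        exact h3
      rw [C.s_alpha_self] at this
      exact pos_not_neg (alpha_ne_zero a) (alpha_nonneg a) (this ▸ hpos1)
    · rw [if_neg e1, if_neg e2] at heq
      exact C.s_inj x a heq
  · intro σ hσ
    obtain ⟨hΔ, hpos, hVS⟩ := (mem_Pset hab).1 hσ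
    by_cases h : σ = alpha a
    · exact ⟨alpha a, (R.alpha_mem_Pset hab x).1, by simp [h]⟩
    · refine ⟨C.s x a σ, ?_, ?_⟩
      · have h1 : C.s (C.r a x) a σ ∈ R.Δ x := by
          have := R.s_mem (i := a) hΔ
          rwa [C.r_invol] at this
        have h2 : 0 ≤ C.s (C.r a x) a σ := R.s_pos hΔ hpos h
        rw [C.s_obj] at h1 h2
        exact (mem_Pset hab).2 ⟨h1, h2, C.VS_s x hVS⟩
      · have hne : C.s x a σ ≠ alpha a := by
          intro hc
          have := congrArg (C.s x a) hc
          rw [C.s_invol, C.s_alpha_self] at this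
          exact pos_not_neg (alpha_ne_zero a) (alpha_nonneg a) (this ▸ hpos)
        simp only [if_neg hne]
        exact C.s_invol x a σ

lemma Pset_step_finite (R : RootSystemOf C) {a b : I} (hab : a ≠ b) (x : X)
    (h : (R.Pset a b (C.r a x)).Finite) : (R.Pset a b x).Finite := by
  have hb := R.Pset_step hab x
  exact Set.Finite.of_finite_image (hb.image_eq ▸ h) hb.injOn

lemma Pset_step_finite' (R : RootSystemOf C) {a b : I} (hab : a ≠ b) (x : X)
    (h : (R.Pset a b x).Finite) : (R.Pset a b (C.r a x)).Finite := by
  have hb := R.Pset_step hab x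
  rw [← hb.image_eq]
  exact h.image _

lemma Pset_step_ncard (R : RootSystemOf C) {a b : I} (hab : a ≠ b) (x : X) :
    (R.Pset a b (C.r a x)).ncard = (R.Pset a b x).ncard := by
  have hb := R.Pset_step hab x
  rw [← hb.image_eq, Set.ncard_image_of_injOn hb.injOn]

/-- the descent to a wrapped configuration. -/
lemma desc (R : RootSystemOf C) :
    ∀ (t : ℕ) (a b : I), a ≠ b → ∀ (x : X) (N : ℕ), t < N →
    (∀ k, k < N → 0 ≤ C.theta a b x k) → ¬ 0 ≤ C.theta a b x N →
    C.theta a b x N = - C.theta a b x t →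
    (R.Pset a b x).Finite ∧ (R.Pset a b x).ncard = N - t := by
  intro t
  induction t with
  | zero =>
      intro a b hab x N htN hrun hneg hwrap
      rw [C.theta_zero] at hwrap
      have := R.wrap_card hab x N (by omega) hrun (by rw [C.theta_zero]; exact hwrap)
      simpa using this
  | succ s ih =>
      intro a b hab x N htN hrun hneg hwrap
      have key : ∀ k, C.theta b a (C.r a x) k = C.s x a (C.theta a b x (k+1)) :=
        fun k => (C.theta_succ' a b x k).symm
      have hrun' : ∀ k, k < N - 1 → 0 ≤ C.theta b a (C.r a x) k := by
        intro k hk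
        rw [key k]
        refine R.s_pos (R.theta_mem a b x (k+1)) (hrun (k+1) (by omega)) ?_
        intro hc
        have h0 : C.theta a b x 0 = alpha a := C.theta_zero a b x
        exact R.theta_run_ne hab x (show (0:ℕ) < k+1 by omega)
          (fun j hj => hrun j (by omega)) (h0.trans hc.symm)
      have hwrap' : C.theta b a (C.r a x) (N-1) = - C.theta b a (C.r a x) s := by
        have hN1 : N - 1 + 1 = N := by omega
        rw [key (N-1), key s, hN1, hwrap, C.s_neg]
      have hneg' : ¬ 0 ≤ C.theta b a (C.r a x) (N-1) := by
        rw [hwrap']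
        exact pos_not_neg (R.theta_ne_zero b a (C.r a x) s)
          (hrun' s (by omega))
      obtain ⟨hf, hc⟩ := ih b a hab.symm (C.r a x) (N-1) (by omega) hrun' hneg' hwrap'
      rw [R.Pset_symm b a (C.r a x)] at hf hc
      constructor
      · exact R.Pset_step_finite hab x hf
      · rw [← R.Pset_step_ncard hab x, hc]
        omega

/-- the rank-two structure theorem, finite case. -/
theorem ST_fin (R : RootSystemOf C) {a b : I} (hab : a ≠ b) (x : X)
    (hfin : (R.Pset a b x).Finite) :
    (∀ k, k < (R.Pset a b x).ncard → 0 ≤ C.theta a b x k) ∧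
    C.theta a b x (R.Pset a b x).ncard = - alpha a ∧
    C.theta a b x ((R.Pset a b x).ncard - 1) = alpha b ∧
    2 ≤ (R.Pset a b x).ncard := by
  classical
  set m := (R.Pset a b x).ncard with hm
  have hm2 : 2 ≤ m := by
    have hsub : ({alpha a, alpha b} : Set (I → ℤ)) ⊆ R.Pset a b x := by
      intro v hv
      rcases hv with h | h
      · exact h ▸ (R.alpha_mem_Pset hab x).1
      · exact h ▸ (R.alpha_mem_Pset hab x).2
    have hpair : ({alpha a, alpha b} : Set (I → ℤ)).ncard = 2 :=
      Set.ncard_pair (alpha_ne_alpha hab)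
    rw [← hpair]
    exact Set.ncard_le_ncard hsub hfin
  have hex : ∃ k, ¬ 0 ≤ C.theta a b x k := by
    by_contra hall
    push_neg at hall
    have hsub : (C.theta a b x) '' (Set.Iio (m+1)) ⊆ R.Pset a b x := by
      rintro ρ ⟨k, _, rfl⟩
      exact R.theta_mem_Pset hab x (hall k)
    have hle := Set.ncard_le_ncard hsub hfin
    rw [Set.ncard_image_of_injOn (R.theta_injOn hab x (m+1) (fun k _ => hall k)),
      iio_ncard] at hle
    omega
  set N := Nat.find hex with hNdef
  have hneg : ¬ 0 ≤ C.theta a b x N := Nat.find_spec hex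
  have hrun : ∀ k, k < N → 0 ≤ C.theta a b x k := by
    intro k hk
    have := Nat.find_min hex hk
    simpa using this
  obtain ⟨t, htN, hwrap⟩ := R.wrap_find hab x N hrun hneg
  obtain ⟨hf2, hc2⟩ := R.desc t a b hab x N htN hrun hneg hwrap
  have hNm : N ≤ m := by
    have hsub : (C.theta a b x) '' (Set.Iio N) ⊆ R.Pset a b x := by
      rintro ρ ⟨k, hk, rfl⟩
      exact R.theta_mem_Pset hab x (hrun k hk)
    have hle := Set.ncard_le_ncard hsub hfin
    rwa [Set.ncard_image_of_injOn (R.theta_injOn hab x N hrun), iio_ncard] at hle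
  have ht0 : t = 0 ∧ N = m := by
    rw [← hm] at hc2
    omega
  obtain ⟨ht, hNm'⟩ := ht0
  subst ht
  rw [C.theta_zero] at hwrap
  refine ⟨fun k hk => hrun k (by omega), by rw [← hNm']; exact hwrap, ?_, hm2⟩
  -- the penultimate root is α_b
  have hbmem : alpha b ∈ R.Pset a b x := (R.alpha_mem_Pset hab x).2
  rw [R.wrap_exact hab x N (by omega) hrun
    (by rw [C.theta_zero]; exact hwrap)] at hbmem
  obtain ⟨u, hu, hθu⟩ := hbmem
  simp only [Set.mem_Iio] at hu
  have hum : u = N - 1 := by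
    by_contra hune
    have hu1 : u + 1 < N := by omega
    have hDD := C.theta_DD hab x u
    rw [hθu] at hDD
    unfold DD at hDD
    rw [alpha_apply_ne hab, alpha_self] at hDD
    have hpos1 := hrun (u+1) hu1 a
    simp only [Pi.zero_apply] at hpos1
    omega
  rw [← hθu, hum, hNm']

/-- the rank-two structure theorem, infinite case. -/
theorem ST_inf (R : RootSystemOf C) {a b : I} (hab : a ≠ b) (x : X)
    (hinf : ¬ (R.Pset a b x).Finite) :
    ∀ k, 0 ≤ C.theta a b x k := by
  classical
  by_contra hall
  push_neg at hall
  have hex : ∃ k, ¬ 0 ≤ C.theta a b x k := by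
    obtain ⟨k, hk⟩ := hall
    exact ⟨k, hk⟩
  set N := Nat.find hex with hNdef
  have hneg : ¬ 0 ≤ C.theta a b x N := Nat.find_spec hex
  have hrun : ∀ k, k < N → 0 ≤ C.theta a b x k := by
    intro k hk
    have := Nat.find_min hex hk
    simpa using this
  obtain ⟨t, htN, hwrap⟩ := R.wrap_find hab x N hrun hneg
  obtain ⟨hf2, _⟩ := R.desc t a b hab x N htN hrun hneg hwrap
  exact hinf hf2

end RootSystemOf
namespace CartanScheme

lemma wmap_zero (x : X) (w : List I) : C.wmap x w 0 = 0 := by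
  have := C.wmap_smul x w 0 0
  simpa using this

lemma wmap_sum (x : X) (w : List I) {γ : Type*} (s : Finset γ) (f : γ → (I → ℤ)) :
    C.wmap x w (∑ l ∈ s, f l) = ∑ l ∈ s, C.wmap x w (f l) := by
  classical
  induction s using Finset.induction with
  | empty => simp [wmap_zero]
  | insert _ _ hns ih =>
      rw [Finset.sum_insert hns, Finset.sum_insert hns, C.wmap_add, ih]

lemma ltr_add (a b : I) (p k : ℕ) :
    ltr a b (p + k) = if p % 2 = 0 then ltr a b k else ltr b a k := by
  unfold ltr
  by_cases hp : p % 2 = 0 <;> by_cases hk : k % 2 = 0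
  · have : (p + k) % 2 = 0 := by omega
    simp [this, hp, hk]
  · have : ¬ (p + k) % 2 = 0 := by omega
    simp [this, hp, hk]
  · have : ¬ (p + k) % 2 = 0 := by omega
    simp [this, hp, hk]
  · have : (p + k) % 2 = 0 := by omega
    simp [this, hp, hk]

lemma alt_add (a b : I) (p q : ℕ) :
    alt a b (p + q) = alt a b p ++ (if p % 2 = 0 then alt a b q else alt b a q) := by
  unfold alt
  rw [List.range_add, List.map_append, List.map_map]
  congr 1
  by_cases hp : p % 2 = 0
  · rw [if_pos hp]
    apply List.map_congr_left
    intro k _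
    show ltr a b (p + k) = ltr a b k
    rw [ltr_add, if_pos hp]
  · rw [if_neg hp]
    apply List.map_congr_left
    intro k _
    show ltr a b (p + k) = ltr b a k
    rw [ltr_add, if_neg hp]

lemma ltr_pred (a b : I) (m : ℕ) (hm : 1 ≤ m) : ltr a b m = ltr b a (m - 1) := by
  obtain ⟨k, rfl⟩ : ∃ k, m = k + 1 := ⟨m - 1, by omega⟩
  rw [Nat.add_sub_cancel]
  exact ltr_succ a b k

/-- off-span coordinates are untouched by words in the letters `a`, `b`. -/
lemma wmap_offspan (a b : I) (x : X) (w : List I) (hl : ∀ c ∈ w, c = a ∨ c = b) :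
    ∀ (v : I → ℤ) (l : I), l ≠ a → l ≠ b → C.wmap x w v l = v l := by
  induction w generalizing x with
  | nil => intro v l _ _; rfl
  | cons i t ih =>
      intro v l hla hlb
      rw [wmap_cons]
      have hil : l ≠ i := by
        rcases hl i List.mem_cons_self with h | h
        · rw [h]; exact hla
        · rw [h]; exact hlb
      simp only [Function.comp_apply]
      rw [C.s_apply_coord_ne x i _ hil]
      exact ih (C.r i x) (fun c hc => hl c (List.mem_cons_of_mem i hc)) v l hla hlb

lemma wmap_single (x : X) (c : I) : C.wmap x [c] (alpha c) = - alpha c := by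
  show C.s (C.r c x) c (alpha c) = - alpha c
  rw [s_alpha_self]

lemma wmap_alt_pen (a b : I) (x : X) (m : ℕ) (hm : 1 ≤ m) :
    C.wmap x (alt a b m) (alpha (ltr a b (m - 1))) = - C.theta a b x (m - 1) := by
  obtain ⟨k, rfl⟩ : ∃ k, m = k + 1 := ⟨m - 1, by omega⟩
  have hk : k + 1 - 1 = k := by omega
  rw [hk, alt_succ_snoc, wmap_append]
  show C.wmap x (alt a b k) (C.wmap _ [ltr a b k] (alpha (ltr a b k))) = _
  rw [wmap_single, wmap_neg]
  rfl

end CartanScheme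

namespace RootSystemOf

variable {C}

/-- rigidity:  a word in the letters `a, b` from `x` to `x` fixing `α_a` and `α_b`
acts as the identity. -/
lemma rigid (R : RootSystemOf C) {a b : I} (hab : a ≠ b) (x : X) (W : List I)
    (hl : ∀ c ∈ W, c = a ∨ c = b) (hsrc : C.src x W = x)
    (ha : C.wmap x W (alpha a) = alpha a) (hb : C.wmap x W (alpha b) = alpha b) :
    ∀ v, C.wmap x W v = v := by
  have hsrc' : C.src x W.reverse = x := by
    have := C.src_reverse x W
    rwa [hsrc] at this
  have hJJ' : ∀ v, C.wmap x W.reverse (C.wmap x W v) = v := by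
    intro v
    have := C.wmap_reverse x W v
    rwa [hsrc] at this
  have hl' : ∀ c ∈ W.reverse, c = a ∨ c = b := fun c hc => hl c (List.mem_reverse.1 hc)
  have hfix : ∀ l, C.wmap x W (alpha l) = alpha l := by
    intro l
    by_cases hla : l = a
    · subst hla; exact ha
    by_cases hlb : l = b
    · subst hlb; exact hb
    have humem : C.wmap x W (alpha l) ∈ R.Δ x :=
      R.wmap_mem (by rw [hsrc]; exact R.R2_mem x l)
    have hu'mem : C.wmap x W.reverse (alpha l) ∈ R.Δ x :=
      R.wmap_mem (by rw [hsrc']; exact R.R2_mem x l)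
    have hoff : ∀ l', l' ≠ a → l' ≠ b → C.wmap x W (alpha l) l' = alpha l l' :=
      fun l' h1 h2 => C.wmap_offspan a b x W hl _ l' h1 h2
    have hoff' : ∀ l', l' ≠ a → l' ≠ b → C.wmap x W.reverse (alpha l) l' = alpha l l' :=
      fun l' h1 h2 => C.wmap_offspan a b x W.reverse hl' _ l' h1 h2
    have hposgen : ∀ (u : I → ℤ), u ∈ R.Δ x → u l = 1 → 0 ≤ u := by
      intro u humem hul
      rcases R.R1 x u humem with h | h
      · exact h
      · exfalso
        have := h l
        rw [Pi.neg_apply, hul] at this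
        simp at this
    have hupos : 0 ≤ C.wmap x W (alpha l) :=
      hposgen _ humem (by rw [hoff l hla hlb, alpha_self])
    have hu'pos : 0 ≤ C.wmap x W.reverse (alpha l) :=
      hposgen _ hu'mem (by rw [hoff' l hla hlb, alpha_self])
    set u := C.wmap x W (alpha l) with hu
    set u' := C.wmap x W.reverse (alpha l) with hu'
    have hal : a ≠ l := fun h => hla h.symm
    have hbl : b ≠ l := fun h => hlb h.symm
    have hrep : u = alpha l + u a • alpha a + u b • alpha b := by
      funext l'
      by_cases h1 : l' = a
      · subst h1
        simp only [Pi.add_apply, Pi.smul_apply, smul_eq_mul, alpha_self,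
          alpha_apply_ne hal, alpha_apply_ne hab, mul_one, mul_zero, zero_add, add_zero]
      by_cases h2 : l' = b
      · subst h2
        simp only [Pi.add_apply, Pi.smul_apply, smul_eq_mul, alpha_self,
          alpha_apply_ne hbl, alpha_apply_ne hab.symm, mul_one, mul_zero, zero_add, add_zero]
      · simp only [Pi.add_apply, Pi.smul_apply, smul_eq_mul,
          alpha_apply_ne h1, alpha_apply_ne h2, mul_zero, add_zero]
        exact hoff l' h1 h2
    have ha' : C.wmap x W.reverse (alpha a) = alpha a := by
      have := hJJ' (alpha a); rwa [ha] at this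
    have hb' : C.wmap x W.reverse (alpha b) = alpha b := by
      have := hJJ' (alpha b); rwa [hb] at this
    have happ : alpha l = u' + u a • alpha a + u b • alpha b := by
      have h2 := hJJ' (alpha l)
      rw [← hu, hrep, C.wmap_add, C.wmap_add, C.wmap_smul, C.wmap_smul, ha', hb', ← hu'] at h2
      exact h2.symm
    have hca := congrFun happ a
    have hcb := congrFun happ b
    simp only [Pi.add_apply, Pi.smul_apply, smul_eq_mul, alpha_self,
      alpha_apply_ne hal, alpha_apply_ne hbl, alpha_apply_ne hab,
      alpha_apply_ne hab.symm, mul_one, mul_zero, zero_add, add_zero] at hca hcb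
    have h1 := hupos a
    have h2 := hupos b
    have h3 := hu'pos a
    have h4 := hu'pos b
    simp only [Pi.zero_apply] at h1 h2 h3 h4
    have hua : u a = 0 := by omega
    have hub : u b = 0 := by omega
    show u = alpha l
    rw [hrep, hua, hub]
    simp
  intro v
  have hv : v = ∑ l, v l • alpha l := by
    funext l'
    rw [Finset.sum_apply]
    rw [Finset.sum_eq_single l']
    · simp
    · intro j _ hj
      simp [alpha_apply_ne (Ne.symm hj), Pi.smul_apply]
    · intro h; simp at h
  conv_lhs => rw [hv]
  rw [C.wmap_sum]
  conv_rhs => rw [hv]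
  apply Finset.sum_congr rfl
  intro l _
  rw [C.wmap_smul, hfix l]

end RootSystemOf
namespace CartanScheme

lemma src_alt_even (a b : I) (x : X) (k : ℕ) :
    C.src x (alt b a (2 * k)) = (fun y => C.r a (C.r b y))^[k] x := by
  induction k generalizing x with
  | zero => simp
  | succ n ih =>
      rw [show 2 * (n + 1) = (2 * n) + 1 + 1 by ring, alt_cons, alt_cons]
      show C.src (C.r a (C.r b x)) (alt b a (2 * n)) = _
      rw [ih (C.r a (C.r b x)), Function.iterate_succ_apply]

lemma src_back {x z : X} {w : List I} (h : C.src x w = z) :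
    C.src z w.reverse = x := by
  have := C.src_reverse x w
  rwa [h] at this

end CartanScheme

namespace RootSystemOf

variable {C}

lemma r4_spec (R : RootSystemOf C) {a b : I} (hab : a ≠ b) (x : X)
    (hfin : (R.Pset a b x).Finite) :
    (fun y => C.r a (C.r b y))^[(R.Pset a b x).ncard] x = x :=
  R.R4 x a b hab hfin

lemma src_alt_mid (R : RootSystemOf C) {a b : I} (hab : a ≠ b) (x : X)
    (hfin : (R.Pset a b x).Finite) :
    C.src x (alt a b (R.Pset a b x).ncard) = C.src x (alt b a (R.Pset a b x).ncard) := by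
  set m := (R.Pset a b x).ncard with hm
  have hcyc : C.src x (alt b a (2 * m)) = x := by
    rw [C.src_alt_even a b x m]
    exact R.r4_spec hab x hfin
  have hsplit : alt b a (2 * m) = alt b a m ++ (if m % 2 = 0 then alt b a m else alt a b m) := by
    rw [show 2 * m = m + m by ring, alt_add]
  rw [hsplit, C.src_append] at hcyc
  have hback := C.src_back hcyc
  by_cases hpar : m % 2 = 0
  · rw [if_pos hpar, reverse_alt, if_pos (Nat.even_iff.2 hpar)] at hback
    exact hback
  · rw [if_neg hpar, reverse_alt,
      if_neg (by rw [Nat.even_iff]; omega)] at hback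
    exact hback

/-- The braid relation:  the two alternating words of length `m = #P` represent
the same morphism. -/
theorem braid (R : RootSystemOf C) {a b : I} (hab : a ≠ b) (x : X)
    (hfin : (R.Pset a b x).Finite) :
    C.Rep x (alt a b (R.Pset a b x).ncard) (alt b a (R.Pset a b x).ncard) := by
  classical
  set m := (R.Pset a b x).ncard with hm
  obtain ⟨hrun1, hwrap1, hpen1, hm2⟩ := R.ST_fin hab x hfin
  have hfinba : (R.Pset b a x).Finite := by rw [← R.Pset_symm]; exact hfin
  have hcardba : (R.Pset b a x).ncard = m := by rw [← R.Pset_symm]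
  obtain ⟨hrun2, hwrap2, hpen2, _⟩ := R.ST_fin hab.symm x hfinba
  rw [hcardba] at hwrap2 hpen2
  have hA1 : C.wmap x (alt a b m) (alpha (ltr a b m)) = - alpha a := hwrap1
  have hB1 : C.wmap x (alt b a m) (alpha (ltr b a m)) = - alpha b := hwrap2
  have hA2 : C.wmap x (alt a b m) (alpha (ltr a b (m-1))) = - alpha b := by
    have := C.wmap_alt_pen a b x m (by omega)
    rw [hpen1] at this
    exact this
  have hB2 : C.wmap x (alt b a m) (alpha (ltr b a (m-1))) = - alpha a := by
    have := C.wmap_alt_pen b a x m (by omega)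
    rw [hpen2] at this
    exact this
  have hmid := R.src_alt_mid hab x hfin
  rw [← hm] at hmid
  set H := alt a b m ++ (alt b a m).reverse with hH
  have hsrcH : C.src x H = x := by
    rw [hH, C.src_append, hmid]
    exact C.src_back rfl
  have hletters : ∀ c ∈ H, c = a ∨ c = b := by
    intro c hc
    rcases List.mem_append.1 hc with h | h
    · exact mem_alt h
    · rcases mem_alt (List.mem_reverse.1 h) with h' | h'
      · exact Or.inr h'
      · exact Or.inl h'
  have hJ' : ∀ w0, C.wmap (C.src x (alt b a m)) (alt b a m).reverse
      (C.wmap x (alt b a m) w0) = w0 := fun w0 => C.wmap_reverse x (alt b a m) w0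
  have hwmapH : ∀ w0, C.wmap x H w0 =
      C.wmap x (alt a b m) (C.wmap (C.src x (alt b a m)) (alt b a m).reverse w0) := by
    intro w0
    rw [hH, C.wmap_append, hmid]
    rfl
  have hJ'a : C.wmap (C.src x (alt b a m)) (alt b a m).reverse (alpha a)
      = - alpha (ltr b a (m-1)) := by
    have h5 := hJ' (- alpha (ltr b a (m-1)))
    rw [C.wmap_neg, hB2, neg_neg] at h5
    exact h5
  have hJ'b : C.wmap (C.src x (alt b a m)) (alt b a m).reverse (alpha b)
      = - alpha (ltr b a m) := by
    have h5 := hJ' (- alpha (ltr b a m))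
    rw [C.wmap_neg, hB1, neg_neg] at h5
    exact h5
  have hfix_a : C.wmap x H (alpha a) = alpha a := by
    rw [hwmapH, hJ'a, C.wmap_neg, ← ltr_pred a b m (by omega), hA1, neg_neg]
  have hfix_b : C.wmap x H (alpha b) = alpha b := by
    rw [hwmapH, hJ'b, C.wmap_neg, ltr_pred b a m (by omega), hA2, neg_neg]
  have hid := R.rigid hab x H hletters hsrcH hfix_a hfix_b
  constructor
  · exact hmid.symm
  · funext u
    have h5 := hid (C.wmap x (alt b a m) u)
    rw [hwmapH, hJ'] at h5
    exact h5.symm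

/-- alternating words longer than `m = #P` are not reduced. -/
lemma alt_long (R : RootSystemOf C) {a b : I} (hab : a ≠ b) (x : X)
    (hfin : (R.Pset a b x).Finite) :
    C.len x (alt a b ((R.Pset a b x).ncard + 1)) ≤ (R.Pset a b x).ncard - 1 := by
  set m := (R.Pset a b x).ncard with hm
  have hm2 : 2 ≤ m := (R.ST_fin hab x hfin).2.2.2
  have hfiny : (R.Pset a b (C.r a x)).Finite := R.Pset_step_finite' hab x hfin
  have hfinbay : (R.Pset b a (C.r a x)).Finite := by rw [← R.Pset_symm]; exact hfiny
  have hcard : (R.Pset b a (C.r a x)).ncard = m := by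
    rw [← R.Pset_symm, R.Pset_step_ncard hab x]
  have hbraid := R.braid hab.symm (C.r a x) hfinbay
  rw [hcard] at hbraid
  have h1 : C.Rep x (alt a b (m+1)) (a :: alt a b m) := by
    rw [alt_cons]
    exact C.rep_cons a hbraid
  have h2 : C.Rep x (a :: alt a b m) (alt b a (m-1)) := by
    have hsplit : alt a b m = a :: alt b a (m-1) := by
      obtain ⟨k, hk⟩ : ∃ k, m = k + 1 := ⟨m - 1, by omega⟩
      rw [hk, Nat.add_sub_cancel, alt_cons]
    rw [hsplit]
    exact C.rep_cancel x a (alt b a (m-1))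
  have h3 := C.len_le_of_rep (CartanScheme.Rep.trans C h1 h2)
  rwa [alt_length] at h3

end RootSystemOf
namespace CartanScheme

lemma reduced_chain : ∀ {x : X} {d : List I}, C.Reduced x d → d.Chain' (· ≠ ·) := by
  intro x d
  induction d generalizing x with
  | nil => intro _; simp [List.Chain']
  | cons c rest ih =>
      intro h
      rcases rest with _ | ⟨c2, rest2⟩
      · simp [List.Chain']
      · rw [List.Chain', List.isChain_cons_cons]
        constructor
        · intro hcc
          subst hcc
          have hrep := C.rep_cancel x c rest2
          have hle := C.len_le_of_rep hrep
          unfold Reduced at h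
          simp only [List.length_cons] at h hle
          omega
        · have hsuf : C.Reduced (C.src x [c]) (c2 :: rest2) :=
            C.reduced_suffix (p := [c]) h
          exact ih hsuf

lemma alt_recognize {a b : I} : ∀ (d : List I), (∀ c ∈ d, c = a ∨ c = b) →
    d.Chain' (· ≠ ·) → d = alt a b d.length ∨ d = alt b a d.length := by
  intro d
  induction d with
  | nil => intro _ _; left; rfl
  | cons c rest ih =>
      intro hmem hch
      have hrest := ih (fun e he => hmem e (List.mem_cons_of_mem _ he)) hch.tail
      have hhead : ∀ (u v : I), rest = alt u v rest.length → rest ≠ [] → rest.head? = some u := by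
        intro u v hr hne
        obtain ⟨k, hk⟩ : ∃ k, rest.length = k + 1 :=
          ⟨rest.length - 1, by have := List.length_pos_iff.2 hne; omega⟩
        rw [hr, hk, alt_cons]
        rfl
      have hchne : ∀ c2 rest2, rest = c2 :: rest2 → c ≠ c2 := by
        intro c2 rest2 hr
        rw [hr, List.Chain', List.isChain_cons_cons] at hch
        exact hch.1
      rcases hmem c List.mem_cons_self with hc | hc
      · left
        subst hc
        show c :: rest = alt c b (rest.length + 1)
        rw [alt_cons]
        congr 1
        by_cases hne : rest = []
        · rw [hne]; rfl
        rcases hrest with h | h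
        · exfalso
          have hh := hhead c b h hne
          rcases rest with _ | ⟨c2, rest2⟩
          · exact hne rfl
          · have hc2 : c2 = c := by simpa using hh
            exact hchne c2 rest2 rfl hc2.symm
        · exact h
      · right
        subst hc
        show c :: rest = alt c a (rest.length + 1)
        rw [alt_cons]
        congr 1
        by_cases hne : rest = []
        · rw [hne]; rfl
        rcases hrest with h | h
        · exact h
        · exfalso
          have hh := hhead c a h hne
          rcases rest with _ | ⟨c2, rest2⟩
          · exact hne rfl
          · have hc2 : c2 = c := by simpa using hh
            exact hchne c2 rest2 rfl hc2.symm

lemma alt_getLast? {a b : I} (n : ℕ) (hn : 1 ≤ n) :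
    (alt a b n).getLast? = some (ltr a b (n - 1)) := by
  obtain ⟨k, rfl⟩ : ∃ k, n = k + 1 := ⟨n - 1, by omega⟩
  rw [Nat.add_sub_cancel, alt_succ_snoc]
  exact List.getLast?_concat

end CartanScheme
namespace RootSystemOf

variable {C}

/-- Claim B:  a reduced word `d` in two letters ending with `b` either maps `α_a` to a
nonnegative vector in the span of `α_a, α_b`, or `d ++ [a]` can be shortened. -/
lemma claimB (R : RootSystemOf C) {a b : I} (hab : a ≠ b) (z : X) (d : List I)
    (hmem : ∀ c ∈ d, c = a ∨ c = b) (hlast : d.getLast? = some b)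
    (hred : C.Reduced z d) :
    (0 ≤ C.wmap z d (alpha a) ∧ VS a b (C.wmap z d (alpha a))) ∨
    (C.len z (d ++ [a]) + 1 ≤ d.length) := by
  classical
  have hd : d ≠ [] := by
    intro h; rw [h] at hlast; simp at hlast
  have hn1 : 1 ≤ d.length := List.length_pos_iff.2 hd
  have hch := C.reduced_chain hred
  have core : ∀ (p q : I), p ≠ q →
      ((p = a ∧ q = b) ∨ (p = b ∧ q = a)) →
      d = alt p q d.length → ltr p q (d.length - 1) = b →
      (0 ≤ C.wmap z d (alpha a) ∧ VS a b (C.wmap z d (alpha a))) ∨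
      (C.len z (d ++ [a]) + 1 ≤ d.length) := by
    intro p q hpq hset hdalt hlastltr
    have hVS : ∀ v : I → ℤ, VS p q v → VS a b v := by
      rcases hset with ⟨h1, h2⟩ | ⟨h1, h2⟩
      · subst h1; subst h2; exact fun v hv => hv
      · subst h1; subst h2; exact fun v hv => hv.swap
    set n := d.length with hn
    have hnext : ltr p q n = a := by
      have h1 : ltr p q n ≠ ltr p q (n - 1) := by
        obtain ⟨k, hk⟩ : ∃ k, n = k + 1 := ⟨n - 1, by omega⟩
        rw [hk, Nat.add_sub_cancel]
        exact ltr_ne hpq k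
      rw [hlastltr] at h1
      have h2 : ltr p q n = a ∨ ltr p q n = b := by
        rcases ltr_mem (a := p) (b := q) n with h | h <;>
          rcases hset with ⟨ha', hb'⟩ | ⟨ha', hb'⟩ <;> subst ha' <;> subst hb' <;>
          rw [h] <;> tauto
      rcases h2 with h | h
      · exact h
      · exact absurd h h1
    have hdsnoc : d ++ [a] = alt p q (n + 1) := by
      rw [alt_succ_snoc, ← hdalt, hnext]
    have hval : C.wmap z d (alpha a) = C.theta p q z n := by
      conv_lhs => rw [hdalt, ← hnext]
      rfl
    by_cases hfin : (R.Pset p q z).Finite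
    · set m := (R.Pset p q z).ncard with hm
      have hST := R.ST_fin hpq z hfin
      have hm2 : 2 ≤ m := hST.2.2.2
      rcases lt_trichotomy n m with hlt | heq | hgt
      · left
        rw [hval]
        exact ⟨hST.1 n hlt, hVS _ (C.VS_theta p q z n)⟩
      · right
        have halt := R.alt_long hpq z hfin
        rw [← hm, ← heq, ← hdsnoc] at halt
        omega
      · exfalso
        have hpre : d = alt p q (m + 1) ++
            (if (m + 1) % 2 = 0 then alt p q (n - (m+1)) else alt q p (n - (m+1))) := by
          conv_lhs => rw [hdalt, show n = (m + 1) + (n - (m+1)) by omega]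
          rw [alt_add]
        have hredpre : C.Reduced z (alt p q (m + 1)) := by
          rw [hpre] at hred
          exact C.reduced_prefix hred
        have halt := R.alt_long hpq z hfin
        rw [← hm] at halt
        unfold CartanScheme.Reduced at hredpre
        rw [alt_length] at hredpre
        omega
    · left
      rw [hval]
      exact ⟨R.ST_inf hpq z hfin n, hVS _ (C.VS_theta p q z n)⟩
  rcases CartanScheme.alt_recognize d hmem hch with hda | hdb
  · refine core a b hab (Or.inl ⟨rfl, rfl⟩) hda ?_
    have h1 := CartanScheme.alt_getLast? (a := a) (b := b) d.length hn1
    rw [← hda, hlast] at h1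
    exact (Option.some_injective _ h1).symm
  · refine core b a hab.symm (Or.inr ⟨rfl, rfl⟩) hdb ?_
    have h1 := CartanScheme.alt_getLast? (a := b) (b := a) d.length hn1
    rw [← hdb, hlast] at h1
    exact (Option.some_injective _ h1).symm

end RootSystemOf
namespace RootSystemOf

variable {C}

/-- The key length lemma (KL): if a reduced word makes `α_a` negative, appending the
letter `a` shortens it. -/
theorem KL (R : RootSystemOf C) :
    ∀ (n : ℕ) (x : X) (w : List I) (aa : I), w.length = n → C.Reduced x w →
    ¬ 0 ≤ C.wmap x w (alpha aa) → C.len x (w ++ [aa]) + 1 ≤ n := by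
  intro n
  induction n using Nat.strong_induction_on with
  | _ n IH =>
  intro x w aa hwlen hwred hneg
  rcases List.eq_nil_or_concat w with hwnil | ⟨t, bb, hw⟩
  · subst hwnil
    exact absurd (alpha_nonneg aa) hneg
  rw [List.concat_eq_append] at hw
  subst hw
  by_cases hba : bb = aa
  · subst hba
    have hrep : C.Rep x ((t ++ [bb]) ++ [bb]) t := by
      have h1 : (t ++ [bb]) ++ [bb] = t ++ [bb, bb] := by simp
      rw [h1]
      have h3 := C.rep_append_right t (C.rep_cancel (C.src x t) bb ([] : List I))
      simpa using h3
    have hle := C.len_le_of_rep hrep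
    simp only [List.length_append, List.length_singleton] at hwlen
    omega
  · have haabb : aa ≠ bb := fun h => hba h.symm
    have AUX : ∀ (vl : ℕ) (v d : List I), v.length = vl →
        (∀ c ∈ d, c = aa ∨ c = bb) → d.getLast? = some bb →
        C.Rep x (t ++ [bb]) (v ++ d) → v.length + d.length = n → C.Reduced x v →
        C.len x ((t ++ [bb]) ++ [aa]) + 1 ≤ n := by
      intro vl
      induction vl using Nat.strong_induction_on with
      | _ vl IHv =>
      intro v d hvlen hdmem hdlast hrep hsum hvred
      have hdne : d ≠ [] := by intro h; rw [h] at hdlast; simp at hdlast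
      have hd1 : 1 ≤ d.length := List.length_pos_iff.2 hdne
      by_cases hpos : 0 ≤ C.wmap x v (alpha aa) ∧ 0 ≤ C.wmap x v (alpha bb)
      · have hvdred : C.Reduced x (v ++ d) := by
          unfold CartanScheme.Reduced
          rw [← C.len_congr hrep, hwred]
          simp only [List.length_append, List.length_singleton] at hwlen ⊢
          omega
        have hdred : C.Reduced (C.src x v) d := C.reduced_suffix hvdred
        rcases R.claimB haabb (C.src x v) d hdmem hdlast hdred with ⟨hp, hVS⟩ | hshort
        · exfalso
          apply hneg
          set ρ := C.wmap (C.src x v) d (alpha aa) with hρ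
          have hdecomp : ρ = ρ aa • alpha aa + ρ bb • alpha bb := by
            funext l
            by_cases h1 : l = aa
            · subst h1
              simp only [Pi.add_apply, Pi.smul_apply, smul_eq_mul, alpha_self,
                alpha_apply_ne haabb, mul_one, mul_zero, add_zero]
            by_cases h2 : l = bb
            · subst h2
              simp only [Pi.add_apply, Pi.smul_apply, smul_eq_mul, alpha_self,
                alpha_apply_ne haabb.symm, mul_one, mul_zero, zero_add]
            · simp only [Pi.add_apply, Pi.smul_apply, smul_eq_mul,
                alpha_apply_ne h1, alpha_apply_ne h2, mul_zero, add_zero]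
              exact hVS l h1 h2
          have hw : C.wmap x (t ++ [bb]) (alpha aa) = C.wmap x v ρ := by
            rw [← hrep.2, C.wmap_append]
            rfl
          rw [hw, hdecomp, C.wmap_add, C.wmap_smul, C.wmap_smul]
          intro l
          have h1 := hpos.1 l
          have h2 := hpos.2 l
          have h3 := hp aa
          have h4 := hp bb
          simp only [Pi.zero_apply] at h1 h2 h3 h4 ⊢
          simp only [Pi.add_apply, Pi.smul_apply, smul_eq_mul]
          exact add_nonneg (mul_nonneg h3 h1) (mul_nonneg h4 h2)
        · obtain ⟨e', herep, helen⟩ := C.exists_min_word (C.src x v) (d ++ [aa])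
          have helen' : e'.length ≤ d.length - 1 := by omega
          have hrep2 : C.Rep x ((t ++ [bb]) ++ [aa]) (v ++ e') := by
            have r1 := C.rep_append_left hrep [aa]
            have r2 : C.Rep x ((v ++ d) ++ [aa]) (v ++ e') := by
              rw [List.append_assoc]
              exact C.rep_append_right v herep
            exact CartanScheme.Rep.trans C r1 r2
          have hle := C.len_le_of_rep hrep2
          simp only [List.length_append, List.length_singleton] at hle
          omega
      · push_neg at hpos
        have hvne : v ≠ [] := by
          intro h
          subst h
          exact hpos (alpha_nonneg aa) (alpha_nonneg bb)
        have hv1 : 1 ≤ v.length := List.length_pos_iff.2 hvne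
        obtain ⟨cc, hcc, hccneg⟩ : ∃ cc, (cc = aa ∨ cc = bb) ∧ ¬ 0 ≤ C.wmap x v (alpha cc) := by
          by_cases h1 : 0 ≤ C.wmap x v (alpha aa)
          · exact ⟨bb, Or.inr rfl, hpos h1⟩
          · exact ⟨aa, Or.inl rfl, h1⟩
        have hvlt : v.length < n := by omega
        have hklv := IH v.length hvlt x v cc rfl hvred hccneg
        obtain ⟨e, herep, helen⟩ := C.exists_min_word x (v ++ [cc])
        have hrepv : C.Rep x v (e ++ [cc]) := by
          have r2 : C.Rep x (v ++ [cc, cc]) (v ++ []) :=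
            C.rep_append_right v (C.rep_cancel (C.src x v) cc ([] : List I))
          have r2' : C.Rep x v (v ++ [cc, cc]) := by
            have := r2.symm
            simpa using this
          have r3 := C.rep_append_left herep [cc]
          have r4 : v ++ [cc, cc] = (v ++ [cc]) ++ [cc] := by simp
          rw [r4] at r2'
          exact CartanScheme.Rep.trans C r2' r3
        have helt : e.length ≤ v.length - 1 := by
          omega
        have hered : C.Reduced x e := by
          unfold CartanScheme.Reduced
          rw [← C.len_congr herep, helen]
        have hrepw : C.Rep x (t ++ [bb]) ((e ++ [cc]) ++ d) :=
          CartanScheme.Rep.trans C hrep (C.rep_append_left hrepv d)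
        have hlenok : e.length = v.length - 1 := by
          by_contra hne2
          have hle := C.len_le_of_rep hrepw
          rw [hwred] at hle
          simp only [List.length_append, List.length_singleton] at hle hwlen
          omega
        have hassoc : (e ++ [cc]) ++ d = e ++ (cc :: d) := by
          rw [List.append_assoc]
          rfl
        rw [hassoc] at hrepw
        refine IHv e.length (by omega) e (cc :: d) rfl ?_ ?_ hrepw ?_ hered
        · intro c hc
          rcases List.mem_cons.1 hc with h | h
          · rw [h]; exact hcc
          · exact hdmem c h
        · rcases d with _ | ⟨d0, d1⟩
          · exact absurd rfl hdne
          · rw [List.getLast?_cons_cons]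
            exact hdlast
        · simp only [List.length_cons]
          omega
    refine AUX t.length t [bb] rfl ?_ rfl (CartanScheme.Rep.refl C x (t ++ [bb])) ?_
      (C.reduced_prefix hwred)
    · intro c hc
      right
      simpa using hc
    · simp only [List.length_append, List.length_singleton] at hwlen
      simpa using hwlen

end RootSystemOf
namespace CartanScheme

lemma betas_getElem : ∀ (w : List I) (x : X) (k : ℕ) (hk : k < w.length),
    (C.betas x w)[k]'(by rw [betas_length]; exact hk) =
      C.wmap x (w.take k) (alpha (w[k]'hk)) := by
  intro w
  induction w with
  | nil => intro x k hk; simp at hk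
  | cons i t ih =>
      intro x k hk
      cases k with
      | zero =>
          show (alpha i :: (C.betas (C.r i x) t).map (C.s (C.r i x) i))[0]'(by simp) = _
          simp only [List.getElem_cons_zero, List.take_zero, List.getElem_cons_zero]
          rfl
      | succ k' =>
          have hk' : k' < t.length := by simpa using hk
          show (alpha i :: (C.betas (C.r i x) t).map (C.s (C.r i x) i))[k'+1]'(by
            simp [betas_length]; omega) = _
          rw [List.getElem_cons_succ, List.getElem_map]
          rw [ih (C.r i x) k' hk']
          show C.s (C.r i x) i (C.wmap (C.r i x) (t.take k') (alpha (t[k']'hk'))) =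
            C.wmap x ((i :: t).take (k'+1)) (alpha ((i :: t)[k'+1]'hk))
          rw [List.take_succ_cons, List.getElem_cons_succ, wmap_cons]
          simp only [Function.comp_apply]
          rw [s_obj]

end CartanScheme

namespace RootSystemOf

variable {C}

/-- The main statement, by strong induction on the length. -/
theorem Smain (R : RootSystemOf C) :
    ∀ (n : ℕ) (x : X) (w : List I), w.length = n → C.Reduced x w →
    (∀ v ∈ C.betas x w, v ∈ R.Δ x ∧ 0 ≤ v) ∧ (C.betas x w).Nodup := by
  intro n
  induction n using Nat.strong_induction_on with
  | _ n IH =>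
  intro x w hwlen hwred
  rcases List.eq_nil_or_concat w with hwnil | ⟨t, aa, hw⟩
  · subst hwnil
    have hb : C.betas x [] = [] := rfl
    rw [hb]
    exact ⟨fun v hv => absurd hv List.not_mem_nil, List.nodup_nil⟩
  rw [List.concat_eq_append] at hw
  subst hw
  have hn1 : t.length + 1 = n := by
    simp only [List.length_append, List.length_singleton] at hwlen
    omega
  have htred := C.reduced_prefix hwred
  obtain ⟨hIH1, hIH2⟩ := IH t.length (by omega) x t rfl htred
  set γ := C.wmap x t (alpha aa) with hγ
  have hbet : C.betas x (t ++ [aa]) = C.betas x t ++ [γ] := C.betas_snoc x t aa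
  have hγΔ : γ ∈ R.Δ x := R.wmap_mem (R.R2_mem _ _)
  have hγpos : 0 ≤ γ := by
    by_contra hneg
    have hkl := R.KL t.length x t aa rfl htred hneg
    have h2 : C.len x (t ++ [aa]) = t.length + 1 := by
      have := hwred
      unfold CartanScheme.Reduced at this
      simp only [List.length_append, List.length_singleton] at this
      omega
    omega
  have hnotmem : γ ∉ C.betas x t := by
    intro hmem
    obtain ⟨k, hklt, hkeq⟩ := List.mem_iff_getElem.1 hmem
    have hkw : k < t.length := by rwa [C.betas_length] at hklt
    have hbg := C.betas_getElem t x k hkw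
    set cc := t[k]'hkw with hcc
    set p := t.take k with hp
    set q := t.drop (k+1) with hq
    have hsplit : t = p ++ cc :: q := by
      conv_lhs => rw [← List.take_append_drop k t]
      rw [List.drop_eq_getElem_cons hkw]
    have heq1 : C.wmap x t (alpha aa) = C.wmap x p (alpha cc) := by
      rw [← hγ]
      rw [hbg] at hkeq
      exact hkeq.symm
    have heq2 : C.wmap (C.src x p) (cc :: q) (alpha aa) = alpha cc := by
      apply C.wmap_inj x p
      have h5 : C.wmap x p (C.wmap (C.src x p) (cc :: q) (alpha aa))
          = C.wmap x (p ++ cc :: q) (alpha aa) := by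
        rw [C.wmap_append]
        rfl
      rw [h5, ← hsplit]
      exact heq1
    have heq3 : C.wmap (C.r cc (C.src x p)) q (alpha aa) = - alpha cc := by
      have h5 : C.wmap (C.src x p) (cc :: q) (alpha aa)
          = C.s (C.src x p) cc (C.wmap (C.r cc (C.src x p)) q (alpha aa)) := by
        rw [C.wmap_cons]
        rfl
      rw [heq2] at h5
      have h6 := congrArg (C.s (C.src x p) cc) h5
      rw [C.s_invol, C.s_alpha_self] at h6
      exact h6.symm
    have hnegq : ¬ 0 ≤ C.wmap (C.r cc (C.src x p)) q (alpha aa) := by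
      rw [heq3]
      exact neg_alpha_not_nonneg cc
    have hobj : C.src x (p ++ [cc]) = C.r cc (C.src x p) := by
      rw [C.src_append]
      rfl
    have hsplit2 : t ++ [aa] = (p ++ [cc]) ++ (q ++ [aa]) := by
      rw [hsplit]
      simp
    have hqared : C.Reduced (C.r cc (C.src x p)) (q ++ [aa]) := by
      rw [← hobj]
      exact C.reduced_suffix (by rw [← hsplit2]; exact hwred)
    have hqred : C.Reduced (C.r cc (C.src x p)) q := C.reduced_prefix hqared
    have hklq := R.KL q.length (C.r cc (C.src x p)) q aa rfl hqred hnegq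
    have h7 : C.len (C.r cc (C.src x p)) (q ++ [aa]) = q.length + 1 := by
      have := hqared
      unfold CartanScheme.Reduced at this
      simp only [List.length_append, List.length_singleton] at this
      omega
    omega
  constructor
  · intro v hv
    rw [hbet] at hv
    rcases List.mem_append.1 hv with h | h
    · exact hIH1 v h
    · have hvγ : v = γ := by simpa using h
      rw [hvγ]
      exact ⟨hγΔ, hγpos⟩
  · rw [hbet, List.nodup_append]
    refine ⟨hIH2, List.nodup_singleton γ, ?_⟩
    intro v hv1 u hv2 hvu
    subst hvu
    have : v = γ := by simpa using hv2
    rw [this] at hv1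
    exact hnotmem hv1

end RootSystemOf
end RSAux

/-- Let `R` be a root system of type a Cartan scheme `C`, `x` an object,
and `w = (i_1, …, i_m)` a word such that the morphism `id_x s_{i_1} ⋯ s_{i_m}` has length
`m` (a reduced expression).  Then the roots `β_k = id_x s_{i_1} ⋯ s_{i_{k-1}} (α_{i_k})`,
`k = 1, …, m`, are positive and pairwise distinct. -/
theorem rootSystem_betas_pos_nodup
    {I X : Type*} [Fintype I] [DecidableEq I] [Nonempty I] [Nonempty X]
    (C : CartanScheme I X) (R : RootSystemOf C) (x : X) (w : List I)
    (hred : C.len x w = w.length) :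
    (∀ b ∈ C.betas x w, b ∈ R.Δ x ∧ 0 ≤ b) ∧ (C.betas x w).Nodup :=
  RootSystemOf.Smain R w.length x w rfl hred
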